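/- arXiv:1004.5524 — 5 statements merged into one kernel-verified Lean document; each statement's English description precedes it below -/
import Mathlib

section
/- Let V be an open subset of a metrizable separable space Ω and let c be a capacity on a lattice L ⊆ C_b(Ω) (extended to all functions via the lower-semicontinuous extension). Then there exists an increasing sequence of non-negative continuous bounded functions h_n on Ω with pointwise limit the indicator function of V, such that c(1_V) = lim_{n→∞} c(h_n). -/
open Filter Topology

/-!
Since `1_V` is lower semicontinuous, `c 1_V` is the supremum of `c φ` over `φ ∈ L` with
`0 ≤ φ ≤ 1_V`, so some such `φ n` satisfy `c (φ n) → c 1_V`. Independently, `1_V` is the pointwise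
limit of continuous `0 ≤ g n ≤ 1_V` (one minus the outer approximations of the closed set `Vᶜ`).
The running maxima `h n = ⨆ k ≤ n, φ k ⊔ g k` are increasing and continuous, squeezed pointwise
between `g n` and `1_V`, and, by monotonicity of `c`, `c (h n)` is squeezed between `c (φ n)` and
`c 1_V`.
-/

theorem IsLUB.exists_seq_tendsto_image {α : Type*} {c : α → ℝ} {A : Set α} {a : ℝ}
    (h : IsLUB (c '' A) a) : ∃ u : ℕ → α, (∀ n, u n ∈ A) ∧ Tendsto (c ∘ u) atTop (𝓝 a) := by
  obtain ⟨r, -, -, hr_lim, hr_mem⟩ := h.exists_seq_monotone_tendsto h.nonempty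
  choose u hu hcu using hr_mem
  exact ⟨u, hu, by simpa only [Function.comp_def, hcu] using hr_lim⟩

theorem IsOpen.exists_continuous_tendsto_indicator {X : Type*} [TopologicalSpace X]
    [HasOuterApproxClosed X] {V : Set X} (hV : IsOpen V) :
    ∃ g : ℕ → X → ℝ, (∀ n, Continuous (g n)) ∧ (∀ n, 0 ≤ g n) ∧
      (∀ n, g n ≤ V.indicator fun _ => 1) ∧
      ∀ x, Tendsto (g · x) atTop (𝓝 (V.indicator (fun _ => 1) x)) := by
  have hVc := hV.isClosed_compl
  refine ⟨fun n x => 1 - hVc.apprSeq n x, fun n => by fun_prop, fun n x => ?_, fun n x => ?_,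
    fun x => ?_⟩
  · simpa using HasOuterApproxClosed.apprSeq_apply_le_one hVc n x
  · by_cases hx : x ∈ V
    · simp [hx]
    · simp [hx, HasOuterApproxClosed.apprSeq_apply_eq_one hVc n (Set.mem_compl hx)]
  · have hlim :=
      NNReal.tendsto_coe.2 (tendsto_pi_nhds.1 (HasOuterApproxClosed.tendsto_apprSeq hVc) x)
    have hind : V.indicator (fun _ => (1 : ℝ)) x = 1 - Vᶜ.indicator (fun _ => 1) x := by
      rw [Set.indicator_compl]; simp
    rw [hind]
    simpa [NNReal.coe_indicator] using tendsto_const_nhds.sub hlim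

theorem tendsto_of_abs_mono_of_le_of_le {Ω : Type*} {c : (Ω → ℝ) → ℝ}
    (hmono : ∀ f g : Ω → ℝ, (∀ x, |f x| ≤ |g x|) → c f ≤ c g) {φ h : ℕ → Ω → ℝ} {F : Ω → ℝ}
    (hφ_nonneg : ∀ n, 0 ≤ φ n) (hφh : ∀ n, φ n ≤ h n) (hhF : ∀ n, h n ≤ F)
    (hφ : Tendsto (fun n => c (φ n)) atTop (𝓝 (c F))) :
    Tendsto (fun n => c (h n)) atTop (𝓝 (c F)) := by
  have hφ_le_h (n : ℕ) : c (φ n) ≤ c (h n) := hmono _ _ fun x => by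
    rw [abs_of_nonneg (hφ_nonneg n x), abs_of_nonneg ((hφ_nonneg n x).trans (hφh n x))]
    exact hφh n x
  have hh_le_F (n : ℕ) : c (h n) ≤ c F := hmono _ _ fun x => by
    have := (hφ_nonneg n x).trans (hφh n x)
    rw [abs_of_nonneg this, abs_of_nonneg (this.trans (hhF n x))]
    exact hhF n x
  exact tendsto_of_tendsto_of_tendsto_of_le_of_le hφ tendsto_const_nhds hφ_le_h hh_le_F

theorem stmt0_general {Ω : Type} [t : TopologicalSpace Ω] [TopologicalSpace.MetrizableSpace Ω]
    (L : Set (Ω → ℝ))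
    (hLc : ∀ f ∈ L, Continuous f ∧ ∃ M : ℝ, ∀ x, |f x| ≤ M)
    (c : (Ω → ℝ) → ℝ)
    (hmono : ∀ f g : Ω → ℝ, (∀ x, |f x| ≤ |g x|) → c f ≤ c g)
    (hlsc : ∀ f : Ω → ℝ, LowerSemicontinuous f → (∀ x, 0 ≤ f x) → (∃ M : ℝ, ∀ x, f x ≤ M) →
        IsLUB {r : ℝ | ∃ φ ∈ L, (∀ x, 0 ≤ φ x ∧ φ x ≤ f x) ∧ c φ = r} (c f))
    (V : Set Ω) (hV : IsOpen V) :
    ∃ h : ℕ → Ω → ℝ,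
      (∀ n, Continuous (h n) ∧ (∀ x, 0 ≤ h n x) ∧ ∃ M : ℝ, ∀ x, |h n x| ≤ M) ∧
      (∀ x, Monotone fun n => h n x) ∧
      (∀ x, Tendsto (fun n => h n x) atTop (𝓝 (V.indicator (fun _ => (1:ℝ)) x))) ∧
      Tendsto (fun n => c (h n)) atTop (𝓝 (c (V.indicator fun _ => (1:ℝ)))) := by
  set I : Ω → ℝ := V.indicator fun _ => 1
  have hI_nonneg : ∀ x, 0 ≤ I x := Set.indicator_nonneg fun _ _ => zero_le_one
  have hI_le_one : ∀ x, I x ≤ 1 := Set.indicator_le_self' fun _ _ => zero_le_one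
  have hI_lub := hlsc I (hV.lowerSemicontinuous_indicator zero_le_one) hI_nonneg ⟨1, hI_le_one⟩
  obtain ⟨φ, hφ, hcφ⟩ := IsLUB.exists_seq_tendsto_image
    (c := c) (A := {φ | φ ∈ L ∧ ∀ x, 0 ≤ φ x ∧ φ x ≤ I x})
    (by simpa only [Set.image, Set.mem_ofPred_eq, and_assoc] using hI_lub)
  obtain ⟨g, hg_cont, hg_nonneg, hg_le, hg_lim⟩ := hV.exists_continuous_tendsto_indicator
  set h := partialSups fun n => φ n ⊔ g n
  have hφ_le_h (n : ℕ) : φ n ≤ h n := le_sup_left.trans (le_partialSups (fun n => φ n ⊔ g n) n)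
  have hg_le_h (n : ℕ) : g n ≤ h n := le_sup_right.trans (le_partialSups (fun n => φ n ⊔ g n) n)
  have hh_le_I (n : ℕ) : h n ≤ I :=
    partialSups_le _ _ _ fun k _ => sup_le (fun x => (hφ k).2 x |>.2) (hg_le k)
  have hh_nonneg (n : ℕ) : 0 ≤ h n := (hg_nonneg n).trans (hg_le_h n)
  refine ⟨h, fun n => ⟨?_, hh_nonneg n, 1, fun x => ?_⟩, fun x m n hmn => h.monotone hmn x,
    fun x => ?_, ?_⟩
  · exact Continuous.partialSups fun k _ => ((hLc _ (hφ k).1).1).sup (hg_cont k)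
  · rw [abs_of_nonneg (hh_nonneg n x)]
    exact (hh_le_I n x).trans (hI_le_one x)
  · exact tendsto_of_tendsto_of_tendsto_of_le_of_le (hg_lim x) tendsto_const_nhds
      (fun n => hg_le_h n x) (fun n => hh_le_I n x)
  · exact tendsto_of_abs_mono_of_le_of_le hmono (fun n x => ((hφ n).2 x).1) hφ_le_h hh_le_I hcφ

/-- For an open set `V` in a metrizable separable space and a capacity `c`
on a lattice `L ⊆ C_b(Ω)` (extended to all functions by the canonical l.s.c. extension),
there is an increasing sequence of non-negative continuous bounded functions `h n`
converging pointwise to the indicator of `V` with `c (1_V) = lim c (h n)`. -/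
theorem stmt0 {Ω : Type} [t : TopologicalSpace Ω] [TopologicalSpace.MetrizableSpace Ω]
    [TopologicalSpace.SeparableSpace Ω]
    (L : Set (Ω → ℝ))
    (hLc : ∀ f ∈ L, Continuous f ∧ ∃ M : ℝ, ∀ x, |f x| ≤ M)
    (hLconst : ∀ a : ℝ, (fun _ => a) ∈ L)
    (hLadd : ∀ f ∈ L, ∀ g ∈ L, f + g ∈ L)
    (hLsmul : ∀ (a : ℝ), ∀ f ∈ L, a • f ∈ L)
    (hLabs : ∀ f ∈ L, (fun x => |f x|) ∈ L)
    (hLsup : ∀ f ∈ L, ∀ g ∈ L, (fun x => max (f x) (g x)) ∈ L)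
    (hgen : t = TopologicalSpace.induced (fun x (f : L) => f.1 x) Pi.topologicalSpace)
    (c : (Ω → ℝ) → ℝ)
    (hc0 : ∀ f, 0 ≤ c f)
    (hsub : ∀ f g, c (f + g) ≤ c f + c g)
    (hhom : ∀ (a : ℝ) (f : Ω → ℝ), c (a • f) = |a| * c f)
    (hmono : ∀ f g : Ω → ℝ, (∀ x, |f x| ≤ |g x|) → c f ≤ c g)
    (hreg : ∀ f : ℕ → Ω → ℝ, (∀ n, f n ∈ L) → (∀ x, Antitone fun n => f n x) →
        (∀ x, Tendsto (fun n => f n x) atTop (𝓝 0)) →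
        Tendsto (fun n => c (f n)) atTop (𝓝 0))
    (hlsc : ∀ f : Ω → ℝ, LowerSemicontinuous f → (∀ x, 0 ≤ f x) → (∃ M : ℝ, ∀ x, f x ≤ M) →
        IsLUB {r : ℝ | ∃ φ ∈ L, (∀ x, 0 ≤ φ x ∧ φ x ≤ f x) ∧ c φ = r} (c f))
    (hext : ∀ g : Ω → ℝ, (∃ M : ℝ, ∀ x, |g x| ≤ M) →
        IsGLB {r : ℝ | ∃ f : Ω → ℝ, LowerSemicontinuous f ∧ (∀ x, |g x| ≤ f x) ∧ c f = r}
          (c g))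
    (V : Set Ω) (hV : IsOpen V) :
    ∃ h : ℕ → Ω → ℝ,
      (∀ n, Continuous (h n) ∧ (∀ x, 0 ≤ h n x) ∧ ∃ M : ℝ, ∀ x, |h n x| ≤ M) ∧
      (∀ x, Monotone fun n => h n x) ∧
      (∀ x, Tendsto (fun n => h n x) atTop (𝓝 (V.indicator (fun _ => (1:ℝ)) x))) ∧
      Tendsto (fun n => c (h n)) atTop (𝓝 (c (V.indicator fun _ => (1:ℝ)))) :=
  stmt0_general (t := t) L hLc c hmono hlsc V hV
end

section
/- Let P be a weakly relatively compact set of Borel probability measures on a metrizable separable space Ω and let c_p(f) = sup_{P∈P} E_P(|f|^p)^{1/p} on C_b(Ω), 1 ≤ p < ∞, be the associated capacity extended to L^1(c_p). Then for every X ∈ L^1(c_p), c_p(X) = sup_{Q∈P} E_Q(|X|^p)^{1/p}. -/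
/-!
Write `‖X‖_Q` for the `L^p(Q)`-seminorm. The extension dominates every `‖·‖_Q`, `Q ∈ Ps`: a
nonnegative lower semicontinuous `f` is the pointwise limit of the bounded Lipschitz functions
`min n (⨅ y, f y + n * dist x y) ≤ f`, so Fatou's lemma bounds `‖f‖_Q` by `c_p(f)`.
Conversely `c_p` is subadditive (Minkowski), is at most `sup_Q ‖·‖_Q` on continuous functions, and
`‖φ‖_Q ≤ ‖X‖_Q + c_p(X - φ)` for continuous `φ`; hence
`c_p(X) ≤ sup_Q ‖X‖_Q + 2 c_p(X - φ_n)`, and the last term tends to `0` when `X ∈ L^1(c_p)`.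
-/

open Filter MeasureTheory Topology
open scoped ENNReal

/-- The lattice `C_b(Ω)` of bounded continuous real functions. -/
def Cb (Ω : Type) [TopologicalSpace Ω] : Set (Ω → ℝ) :=
  {f | Continuous f ∧ ∃ M : ℝ, ∀ x, |f x| ≤ M}

/-- The capacity `c_{p,Ps}(f) = sup_{Q ∈ Ps} E_Q(|f|^p)^{1/p}` on `C_b(Ω)`. -/
noncomputable def cpCb {Ω : Type} [TopologicalSpace Ω] [MeasurableSpace Ω]
    (Ps : Set (Measure Ω)) (p : ℝ) (f : Ω → ℝ) : ℝ≥0∞ :=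
  ⨆ Q ∈ Ps, (∫⁻ x, (ENNReal.ofReal |f x|) ^ p ∂Q) ^ (1 / p)

/-- Extension of `c_{p,Ps}` to non-negative lower semicontinuous functions:
`c(f) = sup {c(φ) : 0 ≤ φ ≤ f, φ ∈ C_b(Ω)}`. -/
noncomputable def cpLsc {Ω : Type} [TopologicalSpace Ω] [MeasurableSpace Ω]
    (Ps : Set (Measure Ω)) (p : ℝ) (f : Ω → ℝ) : ℝ≥0∞ :=
  ⨆ φ ∈ {φ : Ω → ℝ | φ ∈ Cb Ω ∧ ∀ x, 0 ≤ φ x ∧ φ x ≤ f x}, cpCb Ps p φ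

/-- Extension of `c_{p,Ps}` to arbitrary functions:
`c(g) = inf {c(f) : f ≥ |g|, f lower semicontinuous}`. -/
noncomputable def cpExt {Ω : Type} [TopologicalSpace Ω] [MeasurableSpace Ω]
    (Ps : Set (Measure Ω)) (p : ℝ) (g : Ω → ℝ) : ℝ≥0∞ :=
  ⨅ f ∈ {f : Ω → ℝ | LowerSemicontinuous f ∧ ∀ x, |g x| ≤ f x}, cpLsc Ps p f

/-- Membership in `L^1(c)` for an `ℝ≥0∞`-valued capacity `c`: `g` is a `c`-limit of
bounded continuous functions. -/
def MemL1e {Ω : Type} [TopologicalSpace Ω] (c : (Ω → ℝ) → ℝ≥0∞) (g : Ω → ℝ) : Prop :=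
  ∃ f : ℕ → Ω → ℝ, (∀ n, f n ∈ Cb Ω) ∧ Tendsto (fun n => c (g - f n)) atTop (𝓝 0)

/-- The weak topology on measures: the coarsest topology making `μ ↦ ∫ f dμ` continuous
for every bounded continuous `f`. -/
noncomputable def WeakTop (Ω : Type) [TopologicalSpace Ω] [MeasurableSpace Ω] :
    TopologicalSpace (Measure Ω) :=
  TopologicalSpace.induced
    (fun μ => fun f : {g : Ω → ℝ // g ∈ Cb Ω} => ∫ x, f.1 x ∂μ) inferInstance

section LipschitzEnvelope

variable {Ω : Type} [PseudoMetricSpace Ω]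

noncomputable def lipschitzEnvelope (f : Ω → ℝ) (K : ℝ) (x : Ω) : ℝ :=
  ⨅ y, f y + K * dist x y

variable {f : Ω → ℝ} {K : ℝ}

lemma bddBelow_range_add_mul_dist (hf0 : ∀ x, 0 ≤ f x) (hK : 0 ≤ K) (x : Ω) :
    BddBelow (Set.range fun y => f y + K * dist x y) :=
  ⟨0, by rintro _ ⟨y, rfl⟩; exact add_nonneg (hf0 y) (by positivity)⟩

lemma lipschitzEnvelope_nonneg (hf0 : ∀ x, 0 ≤ f x) (hK : 0 ≤ K) (x : Ω) :
    0 ≤ lipschitzEnvelope f K x :=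
  have : Nonempty Ω := ⟨x⟩
  le_ciInf fun y => add_nonneg (hf0 y) (by positivity)

lemma lipschitzEnvelope_le (hf0 : ∀ x, 0 ≤ f x) (hK : 0 ≤ K) (x : Ω) :
    lipschitzEnvelope f K x ≤ f x := by
  simpa [lipschitzEnvelope] using ciInf_le (bddBelow_range_add_mul_dist hf0 hK x) x

lemma lipschitzWith_lipschitzEnvelope (hf0 : ∀ x, 0 ≤ f x) (hK : 0 ≤ K) :
    LipschitzWith K.toNNReal (lipschitzEnvelope f K) := by
  refine LipschitzWith.of_le_add_mul' K fun x x' => ?_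
  have : Nonempty Ω := ⟨x⟩
  rw [← sub_le_iff_le_add]
  refine le_ciInf fun y => ?_
  rw [sub_le_iff_le_add]
  calc lipschitzEnvelope f K x ≤ f y + K * dist x y :=
        ciInf_le (bddBelow_range_add_mul_dist hf0 hK x) y
    _ ≤ f y + K * dist x' y + K * dist x x' := by
        rw [add_assoc, ← mul_add, add_comm (dist x' y)]
        gcongr
        exact dist_triangle x x' y

/-- Near `x` the values of `f` stay above any `c < f x`, and far from `x` the penalty
`n * dist x y` does. -/
lemma tendsto_lipschitzEnvelope (hf : LowerSemicontinuous f) (hf0 : ∀ x, 0 ≤ f x) (x : Ω) :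
    Tendsto (fun n : ℕ => lipschitzEnvelope f n x) atTop (𝓝 (f x)) := by
  have : Nonempty Ω := ⟨x⟩
  refine tendsto_order.2 ⟨fun c hc => ?_, fun c hc => Eventually.of_forall fun n =>
    (lipschitzEnvelope_le hf0 n.cast_nonneg x).trans_lt hc⟩
  obtain ⟨c', hcc', hc'⟩ := exists_between hc
  obtain ⟨δ, hδ, hnear⟩ := Metric.eventually_nhds_iff.1 (hf x c' hc')
  obtain ⟨N, hN⟩ := exists_nat_ge (c' / δ)
  filter_upwards [eventually_ge_atTop N] with n hn
  refine hcc'.trans_le (le_ciInf fun y => ?_)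
  have hn0 : (0 : ℝ) ≤ n * dist x y := by positivity
  rcases lt_or_ge (dist y x) δ with hy | hy
  · linarith [hnear hy]
  · have hc'n : c' ≤ n * δ := by
      rw [div_le_iff₀ hδ] at hN
      nlinarith [(Nat.cast_le (α := ℝ)).2 hn]
    have : (n : ℝ) * δ ≤ n * dist x y := by
      gcongr
      rwa [dist_comm]
    linarith [hf0 y]

theorem LowerSemicontinuous.exists_seq_Cb_tendsto (hf : LowerSemicontinuous f)
    (hf0 : ∀ x, 0 ≤ f x) :
    ∃ ψ : ℕ → Ω → ℝ, (∀ n, ψ n ∈ Cb Ω ∧ ∀ x, 0 ≤ ψ n x ∧ ψ n x ≤ f x) ∧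
      ∀ x, Tendsto (fun n => ψ n x) atTop (𝓝 (f x)) := by
  refine ⟨fun n x => min (n : ℝ) (lipschitzEnvelope f n x), fun n => ⟨⟨?_, n, fun x => ?_⟩,
    fun x => ⟨?_, ?_⟩⟩, fun x => ?_⟩
  · exact continuous_const.min (lipschitzWith_lipschitzEnvelope hf0 n.cast_nonneg).continuous
  · rw [abs_of_nonneg (le_min n.cast_nonneg (lipschitzEnvelope_nonneg hf0 n.cast_nonneg x))]
    exact min_le_left _ _
  · exact le_min n.cast_nonneg (lipschitzEnvelope_nonneg hf0 n.cast_nonneg x)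
  · exact (min_le_right _ _).trans (lipschitzEnvelope_le hf0 n.cast_nonneg x)
  · refine (tendsto_lipschitzEnvelope hf hf0 x).congr' ?_
    obtain ⟨N, hN⟩ := exists_nat_ge (f x)
    filter_upwards [eventually_ge_atTop N] with n hn
    exact (min_eq_right (((lipschitzEnvelope_le hf0 n.cast_nonneg x).trans hN).trans
      (Nat.cast_le.2 hn))).symm

end LipschitzEnvelope

lemma eLpNorm_le_eLpNorm_add_eLpNorm_of_abs_le {α : Type*} [MeasurableSpace α] {μ : Measure α}
    {p : ℝ≥0∞} (hp : 1 ≤ p) {u v w : α → ℝ} (hu : Measurable u) (hv : Measurable v)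
    (h : ∀ x, |u x| ≤ |w x| + v x) :
    eLpNorm u p μ ≤ eLpNorm w p μ + eLpNorm v p μ := by
  -- `w` need not be measurable, so we pass through the measurable minorant `m ≤ |w|`.
  set m : α → ℝ := fun x => max (|u x| - v x) 0
  have hm : Measurable m := (hu.abs.sub hv).max measurable_const
  calc eLpNorm u p μ ≤ eLpNorm (m + v) p μ :=
        eLpNorm_mono_real fun x => by
          simp only [Real.norm_eq_abs, Pi.add_apply, m]
          linarith [le_max_left (|u x| - v x) 0]
    _ ≤ eLpNorm m p μ + eLpNorm v p μ :=
        eLpNorm_add_le hm.aestronglyMeasurable hv.aestronglyMeasurable hp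
    _ ≤ eLpNorm w p μ + eLpNorm v p μ := by
        gcongr
        refine eLpNorm_mono fun x => ?_
        rw [Real.norm_of_nonneg (le_max_right _ _), Real.norm_eq_abs]
        exact max_le (by linarith [h x]) (abs_nonneg _)

lemma lintegral_ofReal_abs_rpow_rpow_eq_eLpNorm {α : Type*} [MeasurableSpace α] {p : ℝ}
    (hp : 0 < p) (f : α → ℝ) (Q : Measure α) :
    (∫⁻ x, ENNReal.ofReal |f x| ^ p ∂Q) ^ (1 / p) = eLpNorm f (ENNReal.ofReal p) Q := by
  rw [eLpNorm_eq_lintegral_rpow_enorm_toReal (by simpa using hp) ENNReal.ofReal_ne_top,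
    ENNReal.toReal_ofReal hp.le]
  simp only [Real.enorm_eq_ofReal_abs]

section Capacity

variable {Ω : Type} [TopologicalSpace Ω] [MeasurableSpace Ω] {Ps : Set (Measure Ω)} {p : ℝ}

lemma cpCb_eq_iSup_eLpNorm (hp : 0 < p) (f : Ω → ℝ) :
    cpCb Ps p f = ⨆ Q ∈ Ps, eLpNorm f (ENNReal.ofReal p) Q := by
  simp only [cpCb, lintegral_ofReal_abs_rpow_rpow_eq_eLpNorm hp]

lemma cpCb_mono (hp : 0 < p) {f g : Ω → ℝ} (h : ∀ x, |f x| ≤ |g x|) :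
    cpCb Ps p f ≤ cpCb Ps p g := by
  simp only [cpCb_eq_iSup_eLpNorm hp]
  exact iSup₂_mono fun Q _ => eLpNorm_mono fun x => h x

lemma cpLsc_le_cpCb (hp : 0 < p) (f : Ω → ℝ) : cpLsc Ps p f ≤ cpCb Ps p f :=
  iSup₂_le fun _ hφ => cpCb_mono hp fun x => by
    rw [abs_of_nonneg (hφ.2 x).1]
    exact (hφ.2 x).2.trans (le_abs_self _)

lemma cpExt_le_cpCb (hp : 0 < p) {g : Ω → ℝ} (hg : Continuous g) : cpExt Ps p g ≤ cpCb Ps p g :=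
  calc cpExt Ps p g ≤ cpLsc Ps p (fun x => |g x|) :=
        iInf₂_le _ ⟨hg.abs.lowerSemicontinuous, fun _ => le_rfl⟩
    _ ≤ cpCb Ps p (fun x => |g x|) := cpLsc_le_cpCb hp _
    _ ≤ cpCb Ps p g := cpCb_mono hp fun x => (abs_abs (g x)).le

variable [TopologicalSpace.PseudoMetrizableSpace Ω] [OpensMeasurableSpace Ω]

lemma eLpNorm_le_cpLsc (hp : 0 < p) {f : Ω → ℝ} (hf : LowerSemicontinuous f)
    (hf0 : ∀ x, 0 ≤ f x) {Q : Measure Ω} (hQ : Q ∈ Ps) :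
    eLpNorm f (ENNReal.ofReal p) Q ≤ cpLsc Ps p f := by
  let := TopologicalSpace.pseudoMetrizableSpacePseudoMetric Ω
  obtain ⟨ψ, hψ, hlim⟩ := hf.exists_seq_Cb_tendsto hf0
  calc eLpNorm f (ENNReal.ofReal p) Q
      ≤ atTop.liminf fun n => eLpNorm (ψ n) (ENNReal.ofReal p) Q :=
        Lp.eLpNorm_lim_le_liminf_eLpNorm (fun n => (hψ n).1.1.aestronglyMeasurable) f
          (ae_of_all _ hlim)
    _ ≤ cpLsc Ps p f := liminf_le_of_frequently_le' <| Frequently.of_forall fun n =>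
        calc eLpNorm (ψ n) (ENNReal.ofReal p) Q ≤ cpCb Ps p (ψ n) := by
              rw [cpCb_eq_iSup_eLpNorm hp]
              exact le_iSup₂ (f := fun Q (_ : Q ∈ Ps) => eLpNorm (ψ n) _ Q) Q hQ
          _ ≤ cpLsc Ps p f := le_iSup₂ (f := fun φ (_ : φ ∈ _) => cpCb Ps p φ) (ψ n) (hψ n)

lemma eLpNorm_le_cpExt (hp : 0 < p) (X : Ω → ℝ) {Q : Measure Ω} (hQ : Q ∈ Ps) :
    eLpNorm X (ENNReal.ofReal p) Q ≤ cpExt Ps p X :=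
  le_iInf₂ fun _ hf => (eLpNorm_mono_real fun x => hf.2 x).trans
    (eLpNorm_le_cpLsc hp hf.1 (fun x => (abs_nonneg _).trans (hf.2 x)) hQ)

lemma cpLsc_add_le (hp : 1 ≤ p) {f g : Ω → ℝ} (hf : LowerSemicontinuous f)
    (hg : LowerSemicontinuous g) (hf0 : ∀ x, 0 ≤ f x) (hg0 : ∀ x, 0 ≤ g x) :
    cpLsc Ps p (f + g) ≤ cpLsc Ps p f + cpLsc Ps p g := by
  have hp0 : 0 < p := one_pos.trans_le hp
  refine iSup₂_le fun φ hφ => ?_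
  rw [cpCb_eq_iSup_eLpNorm hp0]
  refine iSup₂_le fun Q hQ => ?_
  calc eLpNorm φ (ENNReal.ofReal p) Q ≤ eLpNorm (f + g) (ENNReal.ofReal p) Q :=
        eLpNorm_mono_real fun x => by
          rw [Real.norm_of_nonneg (hφ.2 x).1]
          exact (hφ.2 x).2
    _ ≤ eLpNorm f (ENNReal.ofReal p) Q + eLpNorm g (ENNReal.ofReal p) Q :=
        eLpNorm_add_le hf.measurable.aestronglyMeasurable hg.measurable.aestronglyMeasurable
          (by simpa using hp)
    _ ≤ cpLsc Ps p f + cpLsc Ps p g :=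
        add_le_add (eLpNorm_le_cpLsc hp0 hf hf0 hQ) (eLpNorm_le_cpLsc hp0 hg hg0 hQ)

lemma cpExt_add_le (hp : 1 ≤ p) (a b : Ω → ℝ) :
    cpExt Ps p (a + b) ≤ cpExt Ps p a + cpExt Ps p b := by
  simp only [cpExt, ENNReal.iInf_add, ENNReal.add_iInf]
  refine le_iInf₂ fun g hg => le_iInf₂ fun f hf => iInf₂_le_of_le (f + g)
    ⟨hf.1.add hg.1, fun x => (abs_add_le _ _).trans (add_le_add (hf.2 x) (hg.2 x))⟩ ?_
  exact cpLsc_add_le hp hf.1 hg.1 (fun x => (abs_nonneg _).trans (hf.2 x))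
    (fun x => (abs_nonneg _).trans (hg.2 x))

lemma eLpNorm_le_eLpNorm_add_cpExt_sub (hp : 1 ≤ p) {u : Ω → ℝ} (hu : Measurable u)
    (w : Ω → ℝ) {Q : Measure Ω} (hQ : Q ∈ Ps) :
    eLpNorm u (ENNReal.ofReal p) Q ≤ eLpNorm w (ENNReal.ofReal p) Q + cpExt Ps p (w - u) := by
  have hp0 : 0 < p := one_pos.trans_le hp
  simp only [cpExt, ENNReal.add_iInf]
  refine le_iInf₂ fun f hf => ?_
  have hu_le : ∀ x, |u x| ≤ |w x| + f x := fun x => by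
    have hwu : |w x - u x| ≤ f x := hf.2 x
    linarith [abs_sub_abs_le_abs_sub (u x) (w x), abs_sub_comm (u x) (w x)]
  refine (eLpNorm_le_eLpNorm_add_eLpNorm_of_abs_le (by simpa using hp) hu hf.1.measurable
    hu_le).trans ?_
  gcongr
  exact eLpNorm_le_cpLsc hp0 hf.1 (fun x => (abs_nonneg _).trans (hf.2 x)) hQ

lemma cpExt_le_iSup_eLpNorm_add_two_mul (hp : 1 ≤ p) (X : Ω → ℝ) {φ : Ω → ℝ}
    (hφ : Continuous φ) :
    cpExt Ps p X ≤ (⨆ Q ∈ Ps, eLpNorm X (ENNReal.ofReal p) Q) + 2 * cpExt Ps p (X - φ) := by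
  have hp0 : 0 < p := one_pos.trans_le hp
  set S := ⨆ Q ∈ Ps, eLpNorm X (ENNReal.ofReal p) Q
  have hφS : cpCb Ps p φ ≤ S + cpExt Ps p (X - φ) := by
    rw [cpCb_eq_iSup_eLpNorm hp0]
    refine iSup₂_le fun Q hQ => (eLpNorm_le_eLpNorm_add_cpExt_sub hp hφ.measurable X hQ).trans ?_
    gcongr
    exact le_iSup₂ (f := fun Q (_ : Q ∈ Ps) => eLpNorm X (ENNReal.ofReal p) Q) Q hQ
  calc cpExt Ps p X = cpExt Ps p ((X - φ) + φ) := by rw [sub_add_cancel]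
    _ ≤ cpExt Ps p (X - φ) + cpExt Ps p φ := cpExt_add_le hp _ _
    _ ≤ cpExt Ps p (X - φ) + (S + cpExt Ps p (X - φ)) := by
        gcongr
        exact (cpExt_le_cpCb hp0 hφ).trans hφS
    _ = S + 2 * cpExt Ps p (X - φ) := by ring

end Capacity

theorem stmt14_general {Ω : Type} [TopologicalSpace Ω] [TopologicalSpace.MetrizableSpace Ω]
    [MeasurableSpace Ω] [BorelSpace Ω]
    (Ps : Set (Measure Ω)) (p : ℝ) (hp : 1 ≤ p) :
    ∀ X : Ω → ℝ, MemL1e (cpExt Ps p) X →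
      cpExt Ps p X = ⨆ Q ∈ Ps, (∫⁻ x, (ENNReal.ofReal |X x|) ^ p ∂Q) ^ (1 / p) := by
  rintro X ⟨φ, hφ, hlim⟩
  have hp0 : 0 < p := one_pos.trans_le hp
  simp only [lintegral_ofReal_abs_rpow_rpow_eq_eLpNorm hp0]
  set S := ⨆ Q ∈ Ps, eLpNorm X (ENNReal.ofReal p) Q
  refine le_antisymm ?_ (iSup₂_le fun Q hQ => eLpNorm_le_cpExt hp0 X hQ)
  have hbound : Tendsto (fun n => S + 2 * cpExt Ps p (X - φ n)) atTop (𝓝 S) := by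
    simpa using tendsto_const_nhds.add
      (ENNReal.Tendsto.const_mul hlim (Or.inr ENNReal.ofNat_ne_top))
  exact ge_of_tendsto' hbound fun n => cpExt_le_iSup_eLpNorm_add_two_mul hp X (hφ n).1

/-- For a weakly relatively compact set `Ps` of Borel probability measures
on a metrizable separable space and `1 ≤ p < ∞`, the canonical extension of the
capacity `c_p(f) = sup_{Q ∈ Ps} E_Q(|f|^p)^{1/p}` satisfies
`c_p(X) = sup_{Q ∈ Ps} E_Q(|X|^p)^{1/p}` for every `X ∈ L^1(c_p)`. -/
theorem stmt14 {Ω : Type} [TopologicalSpace Ω] [TopologicalSpace.MetrizableSpace Ω]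
    [TopologicalSpace.SeparableSpace Ω] [MeasurableSpace Ω] [BorelSpace Ω]
    (Ps : Set (Measure Ω)) (hprob : ∀ Q ∈ Ps, IsProbabilityMeasure Q)
    (hcomp : @IsCompact _ (WeakTop Ω) (@closure _ (WeakTop Ω) Ps))
    (p : ℝ) (hp : 1 ≤ p) :
    ∀ X : Ω → ℝ, MemL1e (cpExt Ps p) X →
      cpExt Ps p X = ⨆ Q ∈ Ps, (∫⁻ x, (ENNReal.ofReal |X x|) ^ p ∂Q) ^ (1 / p) :=
  stmt14_general Ps p hp
end

section
/- There exists a weakly relatively compact countable set of probability measures P = {δ_{x_n} : n ∈ ℕ} on Ω = [0,1] (with x_n ∈ (0,1) converging to 0) and a Borel set A = [0,1] ∖ {x_n : n ∈ ℕ} such that c_p(1_A) = 1 while sup_{Q∈P} Q(A)^{1/p} = 0; i.e. the identity c_p(1_A) = sup_{Q∈P} Q(A)^{1/p} fails for general Borel sets. -/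
open Filter MeasureTheory Topology
open scoped ENNReal

/-!
Each `δ_{x n}` gives the complement `A` of the sequence measure zero, yet any lower
semicontinuous `f ≥ 1_A` satisfies `f 0 ≥ 1` at the limit point `0 ∈ A`, hence `f > r` on a
neighbourhood of `0` containing some `x n`. An Urysohn bump of height `r` at `x n` lies below `f`
and has capacity `≥ r`, so `c_p(1_A) ≥ 1`; the bound `≤ 1` comes from the constant `1`.
-/

section Capacity

variable {Ω : Type} [TopologicalSpace Ω]

lemma exists_mem_Cb_le_eq_of_lt [NormalSpace Ω] [T1Space Ω] {f : Ω → ℝ}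
    (hf : LowerSemicontinuous f) (hf0 : ∀ x, 0 ≤ f x) {r : ℝ} (hr : 0 ≤ r) {w : Ω}
    (hw : r < f w) : ∃ φ ∈ Cb Ω, (∀ x, 0 ≤ φ x ∧ φ x ≤ f x) ∧ φ w = r := by
  obtain ⟨u, hu0, hu1, hu⟩ := exists_continuous_zero_one_of_isClosed
    (hf.isOpen_preimage r).isClosed_compl isClosed_singleton
    (Set.disjoint_singleton_right.2 (not_not.2 hw))
  have hru : ∀ x, r * u x ≤ r := fun x => mul_le_of_le_one_right hr (hu x).2
  refine ⟨fun x => r * u x, ⟨continuous_const.mul u.continuous, r, fun x => ?_⟩,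
    fun x => ⟨mul_nonneg hr (hu x).1, ?_⟩, by simp [hu1 rfl]⟩
  · rw [abs_of_nonneg (mul_nonneg hr (hu x).1)]
    exact hru x
  · by_cases hx : r < f x
    · exact (hru x).trans hx.le
    · simp [hu0 hx, hf0 x]

variable [MeasurableSpace Ω] {Ps : Set (Measure Ω)} {p : ℝ}

lemma cpCb_le_one (hPs : ∀ Q ∈ Ps, IsProbabilityMeasure Q) (hp : 0 < p) {φ : Ω → ℝ}
    (hφ : ∀ x, |φ x| ≤ 1) : cpCb Ps p φ ≤ 1 := by
  refine iSup₂_le fun Q hQ => ENNReal.rpow_le_one ?_ (by positivity)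
  have := hPs Q hQ
  calc ∫⁻ x, ENNReal.ofReal |φ x| ^ p ∂Q ≤ ∫⁻ _, 1 ∂Q :=
        lintegral_mono fun x => ENNReal.rpow_le_one (ENNReal.ofReal_le_one.2 (hφ x)) hp.le
    _ = 1 := by simp

lemma cpLsc_le_one (hPs : ∀ Q ∈ Ps, IsProbabilityMeasure Q) (hp : 0 < p) {f : Ω → ℝ}
    (hf : ∀ x, f x ≤ 1) : cpLsc Ps p f ≤ 1 :=
  iSup₂_le fun _ hφ => cpCb_le_one hPs hp fun x =>
    abs_le.2 ⟨by linarith [(hφ.2 x).1], (hφ.2 x).2.trans (hf x)⟩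

lemma cpCb_le_cpLsc {φ f : Ω → ℝ} (hφ : φ ∈ Cb Ω) (hφf : ∀ x, 0 ≤ φ x ∧ φ x ≤ f x) :
    cpCb Ps p φ ≤ cpLsc Ps p f :=
  le_iSup₂ (f := fun φ (_ : φ ∈ {φ | φ ∈ Cb Ω ∧ ∀ x, 0 ≤ φ x ∧ φ x ≤ f x}) => cpCb Ps p φ)
    φ ⟨hφ, hφf⟩

lemma cpExt_le_cpLsc {f g : Ω → ℝ} (hf : LowerSemicontinuous f) (hgf : ∀ x, |g x| ≤ f x) :
    cpExt Ps p g ≤ cpLsc Ps p f :=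
  iInf₂_le f ⟨hf, hgf⟩

lemma cpExt_le_one (hPs : ∀ Q ∈ Ps, IsProbabilityMeasure Q) (hp : 0 < p) {g : Ω → ℝ}
    (hg : ∀ x, |g x| ≤ 1) : cpExt Ps p g ≤ 1 :=
  (cpExt_le_cpLsc lowerSemicontinuous_const hg).trans (cpLsc_le_one hPs hp fun _ => le_rfl)

variable [MeasurableSingletonClass Ω]

lemma ofReal_abs_le_cpCb (hp : 0 < p) {w : Ω} (hw : Measure.dirac w ∈ Ps) (φ : Ω → ℝ) :
    ENNReal.ofReal |φ w| ≤ cpCb Ps p φ := by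
  refine le_trans (le_of_eq ?_) (le_iSup₂ (f := fun Q (_ : Q ∈ Ps) =>
    (∫⁻ x, ENNReal.ofReal |φ x| ^ p ∂Q) ^ (1 / p)) _ hw)
  rw [lintegral_dirac, one_div, ENNReal.rpow_rpow_inv hp.ne']

lemma ofReal_le_cpLsc_of_mem_closure [NormalSpace Ω] [T1Space Ω] (hp : 0 < p) {f : Ω → ℝ}
    (hf : LowerSemicontinuous f) (hf0 : ∀ x, 0 ≤ f x) {z : Ω}
    (hz : z ∈ closure {w | Measure.dirac w ∈ Ps}) : ENNReal.ofReal (f z) ≤ cpLsc Ps p f := by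
  refine le_of_forall_lt_imp_le_of_dense fun b hb => ?_
  have hbz : b.toReal < f z := ENNReal.toReal_lt_of_lt_ofReal hb
  obtain ⟨w, hwf, hw⟩ := mem_closure_iff.1 hz _ (hf.isOpen_preimage b.toReal) hbz
  obtain ⟨φ, hφ, hφf, hφw⟩ := exists_mem_Cb_le_eq_of_lt hf hf0 ENNReal.toReal_nonneg hwf
  calc b = ENNReal.ofReal |φ w| := by
        rw [hφw, abs_of_nonneg ENNReal.toReal_nonneg, ENNReal.ofReal_toReal hb.ne_top]
    _ ≤ cpCb Ps p φ := ofReal_abs_le_cpCb hp hw φ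
    _ ≤ cpLsc Ps p f := cpCb_le_cpLsc hφ hφf

lemma ofReal_abs_le_cpExt_of_mem_closure [NormalSpace Ω] [T1Space Ω] (hp : 0 < p) {z : Ω}
    (hz : z ∈ closure {w | Measure.dirac w ∈ Ps}) (g : Ω → ℝ) :
    ENNReal.ofReal |g z| ≤ cpExt Ps p g :=
  le_iInf₂ fun _ ⟨hf, hgf⟩ => (ENNReal.ofReal_le_ofReal (hgf z)).trans
    (ofReal_le_cpLsc_of_mem_closure hp hf (fun x => (abs_nonneg _).trans (hgf x)) hz)

end Capacity

/-- `WeakTop` need not be Hausdorff, so the closure is controlled through the closed compact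
preimage of the point evaluations rather than by compactness of the Dirac measures alone. -/
lemma isCompact_closure_of_subset_range_dirac {Ω : Type} [TopologicalSpace Ω] [CompactSpace Ω]
    [MeasurableSpace Ω] [MeasurableSingletonClass Ω] {S : Set (Measure Ω)}
    (hS : S ⊆ Set.range Measure.dirac) :
    @IsCompact _ (WeakTop Ω) (@closure _ (WeakTop Ω) S) := by
  let _ := WeakTop Ω
  let Φ : Measure Ω → ({g : Ω → ℝ // g ∈ Cb Ω} → ℝ) := fun μ f => ∫ x, f.1 x ∂μ
  have hΦ : IsInducing Φ := ⟨rfl⟩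
  let ev : Ω → ({g : Ω → ℝ // g ∈ Cb Ω} → ℝ) := fun y f => f.1 y
  have hev : IsCompact (Set.range ev) := isCompact_range (continuous_pi fun f => f.2.1)
  have hΦ_dirac : ∀ y, Φ (Measure.dirac y) = ev y := fun y =>
    funext fun f => integral_dirac f.1 y
  have hK : IsCompact (Φ ⁻¹' Set.range ev) := by
    rw [hΦ.isCompact_iff, Set.image_preimage_eq_of_subset]
    · exact hev
    · rintro _ ⟨y, rfl⟩
      exact ⟨_, hΦ_dirac y⟩
  refine hK.of_isClosed_subset isClosed_closure
    (closure_minimal ?_ (hev.isClosed.preimage hΦ.continuous))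
  rintro _ hμ
  obtain ⟨y, rfl⟩ := hS hμ
  exact ⟨y, (hΦ_dirac y).symm⟩

noncomputable def invAddTwo (n : ℕ) : Set.Icc (0:ℝ) 1 :=
  ⟨1 / (n + 2), by positivity, by
    rw [div_le_one (by positivity)]
    linarith [n.cast_nonneg (α := ℝ)]⟩

lemma coe_invAddTwo_pos (n : ℕ) : 0 < (invAddTwo n : ℝ) := by
  simp only [invAddTwo]
  positivity

lemma coe_invAddTwo_lt_one (n : ℕ) : (invAddTwo n : ℝ) < 1 := by
  simp only [invAddTwo]
  rw [div_lt_one (by positivity)]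
  linarith [n.cast_nonneg (α := ℝ)]

lemma tendsto_coe_invAddTwo : Tendsto (fun n => (invAddTwo n : ℝ)) atTop (𝓝 0) := by
  refine ((tendsto_one_div_add_atTop_nhds_zero_nat (𝕜 := ℝ)).comp
    (tendsto_add_atTop_nat 1)).congr fun n => ?_
  simp only [invAddTwo, Function.comp_apply, Nat.cast_add, Nat.cast_one]
  ring

/-- On `Ω = [0,1]` there is a weakly relatively compact countable set of
probability measures `P = {δ_{x n}}` (with `x n ∈ (0,1)`, `x n → 0`) and a Borel set
`A = [0,1] ∖ {x n}` such that `c_p(1_A) = 1` while `sup_{Q ∈ P} Q(A)^{1/p} = 0`: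
the identity `c_p(1_A) = sup_Q Q(A)^{1/p}` fails for general Borel sets. -/
theorem stmt17 :
    ∃ x : ℕ → (Set.Icc (0:ℝ) 1),
      (∀ n, 0 < (x n : ℝ) ∧ (x n : ℝ) < 1) ∧
      Filter.Tendsto (fun n => (x n : ℝ)) atTop (𝓝 0) ∧
      @IsCompact _ (WeakTop (Set.Icc (0:ℝ) 1))
        (@closure _ (WeakTop (Set.Icc (0:ℝ) 1))
          (Set.range fun n => Measure.dirac (x n))) ∧
      MeasurableSet {y : (Set.Icc (0:ℝ) 1) | y ∉ Set.range x} ∧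
      ∀ p : ℝ, 1 ≤ p →
        cpExt (Set.range fun n => Measure.dirac (x n)) p
          (Set.indicator {y : (Set.Icc (0:ℝ) 1) | y ∉ Set.range x} fun _ => (1:ℝ))
            = 1 ∧
        (⨆ n : ℕ,
          (Measure.dirac (x n) {y : (Set.Icc (0:ℝ) 1) | y ∉ Set.range x}) ^ (1 / p))
            = 0 := by
  have h0A : (0 : Set.Icc (0:ℝ) 1) ∈ {y | y ∉ Set.range invAddTwo} := by
    rintro ⟨n, hn⟩
    simpa [hn] using coe_invAddTwo_pos n
  have h0_closure : (0 : Set.Icc (0:ℝ) 1) ∈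
      closure {w | Measure.dirac w ∈ Set.range fun n => Measure.dirac (invAddTwo n)} :=
    mem_closure_of_tendsto (tendsto_subtype_rng.2 tendsto_coe_invAddTwo)
      (Eventually.of_forall fun n => ⟨n, rfl⟩)
  refine ⟨invAddTwo, fun n => ⟨coe_invAddTwo_pos n, coe_invAddTwo_lt_one n⟩,
    tendsto_coe_invAddTwo, isCompact_closure_of_subset_range_dirac ?_,
    (Set.countable_range _).measurableSet.compl, fun p hp => ?_⟩
  · rintro _ ⟨n, rfl⟩
    exact ⟨_, rfl⟩
  have hp0 : 0 < p := by linarith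
  refine ⟨le_antisymm ?_ ?_, ?_⟩
  · refine cpExt_le_one ?_ hp0 fun y => ?_
    · rintro _ ⟨n, rfl⟩
      infer_instance
    · simpa using norm_indicator_le_norm_self (fun _ => (1:ℝ)) y
  · calc (1 : ℝ≥0∞)
        = ENNReal.ofReal |Set.indicator {y | y ∉ Set.range invAddTwo} (fun _ => (1:ℝ)) 0| := by
          rw [Set.indicator_of_mem h0A, abs_one, ENNReal.ofReal_one]
      _ ≤ _ := ofReal_abs_le_cpExt_of_mem_closure hp0 h0_closure _
  · simp [hp0]
end

section
/- Let {Q_n : n ∈ ℕ} be probability measures with c_p(X) = sup_n E_{Q_n}(|X|^p)^{1/p} for all X ∈ L^1(c_p), and let α_n > 0 with ∑ α_n = 1. Then P = ∑_n α_n Q_n is a probability measure in the canonical c_p-class: for every X ∈ L^1(c_p) with X ≥ 0, E_P(X) = 0 if and only if X = 0 in L^1(c_p). -/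
open Filter MeasureTheory Topology
open scoped ENNReal

/-- `X ≥ 0` in `L^1(c)` for an `ℝ≥0∞`-valued capacity: `X` is approximable in the
`c`-seminorm by non-negative bounded continuous functions. -/
def NonnegL1e {Ω : Type} [TopologicalSpace Ω] (c : (Ω → ℝ) → ℝ≥0∞) (g : Ω → ℝ) : Prop :=
  ∃ f : ℕ → Ω → ℝ, (∀ n, f n ∈ Cb Ω ∧ ∀ x, 0 ≤ f n x) ∧
    Tendsto (fun n => c (g - f n)) atTop (𝓝 0)

/-!
For every `n`, the seminorm `‖·‖_{L^p(Q n)}` is dominated by `c_p` on all functions. On bounded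
continuous functions this is the representation hypothesis; it passes to non-negative lower
semicontinuous `F` because `F` is the pointwise limit of the bounded Lipschitz inf-convolutions
`x ↦ inf_y (min (F y) j + j d(x, y))` (Fatou), and to arbitrary functions because `c_p` is an
infimum over lower semicontinuous majorants.

If `E_P(X⁺) = 0` then `E_{Q n}(X⁺) = 0` for all `n`. For `X` approximated by continuous `f ≥ 0`
and a lower semicontinuous `F ≥ |X - f|`, the measurable function `(f - F)⁺ ≤ X⁺` then vanishes
`Q n`-a.e., so `|X| ≤ 2F` a.e. and `‖X‖_{L^p(Q n)} ≤ 2 c_p(X - f) → 0`. Conversely `c_p(X) = 0`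
kills every `‖X‖_{L^p(Q n)}`, and a function with vanishing `L^p` seminorm has vanishing
positive part integral.
-/

open scoped NNReal

section LscApprox

variable {α : Type} [PseudoMetricSpace α] {F : α → ℝ}

noncomputable def lscApprox (F : α → ℝ) (j : ℕ) (x : α) : ℝ :=
  ⨅ y, (min (F y) j + j * dist x y)

lemma bddBelow_range_lscApprox (hF0 : ∀ x, 0 ≤ F x) (j : ℕ) (x : α) :
    BddBelow (Set.range fun y => min (F y) j + j * dist x y) :=
  ⟨0, by rintro _ ⟨y, rfl⟩; exact add_nonneg (le_min (hF0 y) j.cast_nonneg) (by positivity)⟩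

lemma lscApprox_nonneg (hF0 : ∀ x, 0 ≤ F x) (j : ℕ) (x : α) : 0 ≤ lscApprox F j x :=
  Real.iInf_nonneg fun y => add_nonneg (le_min (hF0 y) j.cast_nonneg) (by positivity)

lemma lscApprox_le_min (hF0 : ∀ x, 0 ≤ F x) (j : ℕ) (x : α) :
    lscApprox F j x ≤ min (F x) j := by
  simpa [lscApprox] using ciInf_le (bddBelow_range_lscApprox hF0 j x) x

lemma lipschitzWith_lscApprox (hF0 : ∀ x, 0 ≤ F x) (j : ℕ) :
    LipschitzWith j (lscApprox F j) := by
  refine LipschitzWith.of_le_add_mul j fun x z => ?_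
  have : Nonempty α := ⟨x⟩
  rw [NNReal.coe_natCast, ← sub_le_iff_le_add]
  refine le_ciInf fun y => sub_le_iff_le_add.2 ?_
  have hxy : lscApprox F j x ≤ min (F y) j + j * dist x y :=
    ciInf_le (bddBelow_range_lscApprox hF0 j x) y
  have htri := mul_le_mul_of_nonneg_left (dist_triangle x z y) j.cast_nonneg
  linarith

lemma lscApprox_mem_Cb (hF0 : ∀ x, 0 ≤ F x) (j : ℕ) : lscApprox F j ∈ Cb α :=
  ⟨(lipschitzWith_lscApprox hF0 j).continuous, j, fun x => by
    rw [abs_of_nonneg (lscApprox_nonneg hF0 j x)]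
    exact (lscApprox_le_min hF0 j x).trans (min_le_right _ _)⟩

lemma tendsto_lscApprox (hF : LowerSemicontinuous F) (hF0 : ∀ x, 0 ≤ F x) (x : α) :
    Tendsto (fun j => lscApprox F j x) atTop (𝓝 (F x)) := by
  refine tendsto_order.2 ⟨fun a ha => ?_, fun b hb => Eventually.of_forall fun j =>
    (lscApprox_le_min hF0 j x).trans_lt ((min_le_left _ _).trans_lt hb)⟩
  have : Nonempty α := ⟨x⟩
  obtain ⟨r, har, hrF⟩ := exists_between ha
  obtain ⟨δ, hδ, hball⟩ := Metric.eventually_nhds_iff_ball.1 (hF x r hrF)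
  obtain ⟨N, hN⟩ := exists_nat_ge (max r (r / δ))
  filter_upwards [eventually_ge_atTop N] with j hj
  have hNj : max r (r / δ) ≤ j := hN.trans (Nat.cast_le.2 hj)
  have hjr : r ≤ j := (le_max_left _ _).trans hNj
  have hjδ : r ≤ j * δ := (div_le_iff₀ hδ).1 ((le_max_right _ _).trans hNj)
  refine har.trans_le (le_ciInf fun y => ?_)
  rcases lt_or_ge (dist y x) δ with hy | hy
  · exact (le_min (hball y hy).le hjr).trans (le_add_of_nonneg_right (by positivity))
  · rw [dist_comm] at hy
    exact (hjδ.trans (mul_le_mul_of_nonneg_left hy j.cast_nonneg)).trans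
      (le_add_of_nonneg_left (le_min (hF0 y) j.cast_nonneg))

end LscApprox

section Measure

variable {α : Type*} [MeasurableSpace α] {μ : Measure α}

lemma eLpNorm'_eq_lintegral_ofReal_abs (X : α → ℝ) (p : ℝ) :
    eLpNorm' X p μ = (∫⁻ x, ENNReal.ofReal |X x| ^ p ∂μ) ^ (1 / p) := by
  simp [eLpNorm'_eq_lintegral_enorm, Real.enorm_eq_ofReal_abs]

lemma lintegral_ofReal_eq_zero_of_eLpNorm'_eq_zero {X : α → ℝ} {p : ℝ} (hp : 0 < p)
    (hX : eLpNorm' X p μ = 0) : ∫⁻ x, ENNReal.ofReal (X x) ∂μ = 0 := by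
  -- `X` need not be measurable: pass to a measurable minorant of `X⁺` with the same integral.
  obtain ⟨g, hg, hgX, hg_eq⟩ := exists_measurable_le_lintegral_eq μ fun x => ENNReal.ofReal (X x)
  have hXp : ∫⁻ x, ‖X x‖ₑ ^ p ∂μ = 0 := by
    rw [eLpNorm'_eq_lintegral_enorm, ENNReal.rpow_eq_zero_iff] at hX
    exact hX.elim (·.1) fun h => absurd h.2 (by simp [hp.le])
  have hgp : ∫⁻ x, g x ^ p ∂μ = 0 := by
    refine le_antisymm ((lintegral_mono fun x => ?_).trans hXp.le) zero_le
    rw [Real.enorm_eq_ofReal_abs]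
    gcongr
    exact (hgX x).trans (ENNReal.ofReal_le_ofReal (le_abs_self _))
  rw [hg_eq, lintegral_eq_zero_iff hg]
  filter_upwards [(lintegral_eq_zero_iff (hg.pow_const p)).1 hgp] with x hx
  simpa [ENNReal.rpow_eq_zero_iff, hp, not_lt.2 hp.le] using hx

lemma ae_abs_le_two_mul_of_lintegral_ofReal_eq_zero {X f F : α → ℝ} (hf : Measurable f)
    (hf0 : ∀ x, 0 ≤ f x) (hF : Measurable F) (hXF : ∀ x, |X x - f x| ≤ F x)
    (hX : ∫⁻ x, ENNReal.ofReal (X x) ∂μ = 0) : ∀ᵐ x ∂μ, |X x| ≤ 2 * F x := by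
  have hfF : ∫⁻ x, ENNReal.ofReal (f x - F x) ∂μ = 0 := by
    refine le_antisymm ((lintegral_mono fun x => ENNReal.ofReal_le_ofReal ?_).trans hX.le)
      zero_le
    linarith [neg_abs_le (X x - f x), hXF x]
  filter_upwards [(lintegral_eq_zero_iff (hf.sub hF).ennreal_ofReal).1 hfF] with x hx
  simp only [Pi.zero_apply, ENNReal.ofReal_eq_zero, Pi.sub_apply] at hx
  have hXfF := abs_le.1 (hXF x)
  rw [abs_le]
  constructor <;> linarith [hf0 x]

lemma isProbabilityMeasure_sum_smul {Q : ℕ → Measure α} (hQ : ∀ n, IsProbabilityMeasure (Q n))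
    {w : ℕ → ℝ≥0∞} (hw : ∑' n, w n = 1) : IsProbabilityMeasure (Measure.sum fun n => w n • Q n) :=
  ⟨by simp [Measure.sum_apply _ MeasurableSet.univ, hw]⟩

lemma lintegral_sum_smul_eq_zero_iff {Q : ℕ → Measure α} {w : ℕ → ℝ≥0∞} (hw : ∀ n, w n ≠ 0)
    (g : α → ℝ≥0∞) :
    ∫⁻ x, g x ∂(Measure.sum fun n => w n • Q n) = 0 ↔ ∀ n, ∫⁻ x, g x ∂(Q n) = 0 := by
  simp [lintegral_sum_measure, ENNReal.tsum_eq_zero, hw]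

end Measure

section Capacity

variable {Ω : Type} [TopologicalSpace Ω] [MeasurableSpace Ω] (Ps : Set (Measure Ω)) {p : ℝ}

lemma cpExt_zero (hp : 0 < p) : cpExt Ps p (0 : Ω → ℝ) = 0 := by
  refine le_antisymm ((iInf₂_le 0 ⟨lowerSemicontinuous_const, fun x => by simp⟩).trans ?_) zero_le
  refine iSup₂_le fun φ hφ => ?_
  obtain rfl : φ = 0 := funext fun x => le_antisymm (hφ.2 x).2 (hφ.2 x).1
  simp [cpCb, ENNReal.zero_rpow_of_pos hp, hp]

lemma memL1e_cpExt_of_mem_Cb (hp : 0 < p) {g : Ω → ℝ} (hg : g ∈ Cb Ω) :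
    MemL1e (cpExt Ps p) g :=
  ⟨fun _ => g, fun _ => hg, by simp [cpExt_zero Ps hp]⟩

variable [OpensMeasurableSpace Ω] {Q : ℕ → Measure Ω}

lemma eLpNorm'_le_cpLsc [TopologicalSpace.PseudoMetrizableSpace Ω]
    (hQrep : ∀ X : Ω → ℝ, MemL1e (cpExt Ps p) X → cpExt Ps p X = ⨆ n, eLpNorm' X p (Q n))
    (hp : 0 < p) (n : ℕ)
    {F : Ω → ℝ} (hF : LowerSemicontinuous F) (hF0 : ∀ x, 0 ≤ F x) :
    eLpNorm' F p (Q n) ≤ cpLsc Ps p F := by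
  let := TopologicalSpace.pseudoMetrizableSpacePseudoMetric Ω
  have happrox (j : ℕ) : eLpNorm' (lscApprox F j) p (Q n) ≤ cpLsc Ps p F :=
    calc eLpNorm' (lscApprox F j) p (Q n) ≤ ⨆ m, eLpNorm' (lscApprox F j) p (Q m) :=
          le_iSup (fun m => eLpNorm' (lscApprox F j) p (Q m)) n
      _ = cpExt Ps p (lscApprox F j) :=
          (hQrep _ (memL1e_cpExt_of_mem_Cb Ps hp (lscApprox_mem_Cb hF0 j))).symm
      _ ≤ cpLsc Ps p F := iInf₂_le F ⟨hF, fun x => by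
          rw [abs_of_nonneg (lscApprox_nonneg hF0 j x)]
          exact (lscApprox_le_min hF0 j x).trans (min_le_left _ _)⟩
  calc eLpNorm' F p (Q n) ≤ atTop.liminf fun j => eLpNorm' (lscApprox F j) p (Q n) :=
        Lp.eLpNorm'_lim_le_liminf_eLpNorm' hp
          (fun j => (lipschitzWith_lscApprox hF0 j).continuous.aestronglyMeasurable)
          (ae_of_all _ (tendsto_lscApprox hF hF0))
    _ ≤ cpLsc Ps p F := liminf_le_of_frequently_le' (Frequently.of_forall happrox)

lemma eLpNorm'_le_two_mul_cpExt_sub [TopologicalSpace.PseudoMetrizableSpace Ω]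
    (hQrep : ∀ X : Ω → ℝ, MemL1e (cpExt Ps p) X → cpExt Ps p X = ⨆ n, eLpNorm' X p (Q n))
    (hp : 0 < p) {n : ℕ} {X f : Ω → ℝ} (hX : ∫⁻ x, ENNReal.ofReal (X x) ∂(Q n) = 0)
    (hf : f ∈ Cb Ω) (hf0 : ∀ x, 0 ≤ f x) :
    eLpNorm' X p (Q n) ≤ 2 * cpExt Ps p (X - f) := by
  simp only [cpExt, ENNReal.mul_iInf_of_ne two_ne_zero ENNReal.ofNat_ne_top]
  refine le_iInf₂ fun F ⟨hF, hXF⟩ => ?_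
  have hF0 (x : Ω) : 0 ≤ F x := (abs_nonneg _).trans (hXF x)
  have hX2F := ae_abs_le_two_mul_of_lintegral_ofReal_eq_zero hf.1.measurable hf0 hF.measurable
    hXF hX
  calc eLpNorm' X p (Q n) ≤ (2 : ℝ≥0) • eLpNorm' F p (Q n) := by
        refine eLpNorm'_le_nnreal_smul_eLpNorm'_of_ae_le_mul ?_ hp
        filter_upwards [hX2F] with x hx
        rw [← NNReal.coe_le_coe]
        simpa [abs_of_nonneg (hF0 x)] using hx
    _ ≤ 2 * cpLsc Ps p F := by
        rw [ENNReal.smul_def, smul_eq_mul, ENNReal.coe_ofNat]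
        gcongr
        exact eLpNorm'_le_cpLsc Ps hQrep hp n hF hF0

end Capacity

theorem stmt18_general {Ω : Type} [TopologicalSpace Ω] [PolishSpace Ω]
    [MeasurableSpace Ω] [BorelSpace Ω]
    (Ps : Set (Measure Ω))
    (p : ℝ) (hp : 1 ≤ p)
    (Q : ℕ → Measure Ω) (hQprob : ∀ n, IsProbabilityMeasure (Q n))
    (hQrep : ∀ X : Ω → ℝ, MemL1e (cpExt Ps p) X →
      cpExt Ps p X = ⨆ n : ℕ, (∫⁻ x, (ENNReal.ofReal |X x|) ^ p ∂(Q n)) ^ (1 / p))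
    (α : ℕ → ℝ≥0∞) (hα : ∀ n, 0 < α n) (hsum : (∑' n, α n) = 1) :
    IsProbabilityMeasure (Measure.sum fun n => α n • Q n) ∧
    ∀ X : Ω → ℝ, MemL1e (cpExt Ps p) X → NonnegL1e (cpExt Ps p) X →
      ((∫⁻ x, ENNReal.ofReal (X x) ∂(Measure.sum fun n => α n • Q n)) = 0 ↔
        cpExt Ps p X = 0) := by
  have hp0 : 0 < p := by linarith
  simp_rw [← eLpNorm'_eq_lintegral_ofReal_abs] at hQrep
  refine ⟨isProbabilityMeasure_sum_smul hQprob hsum, fun X hX ⟨f, hf, hf_tendsto⟩ => ?_⟩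
  rw [lintegral_sum_smul_eq_zero_iff (fun n => (hα n).ne'), hQrep X hX, ENNReal.iSup_eq_zero]
  refine forall_congr' fun n => ⟨fun hXn => ?_, lintegral_ofReal_eq_zero_of_eLpNorm'_eq_zero hp0⟩
  have h2c : Tendsto (fun k => 2 * cpExt Ps p (X - f k)) atTop (𝓝 0) := by
    simpa using ENNReal.Tendsto.const_mul hf_tendsto (Or.inr ENNReal.ofNat_ne_top)
  exact le_antisymm (ge_of_tendsto' h2c fun k =>
    eLpNorm'_le_two_mul_cpExt_sub Ps hQrep hp0 hXn (hf k).1 (hf k).2) zero_le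

/-- If `{Q n}` are probability measures with
`c_p(X) = sup_n E_{Q n}(|X|^p)^{1/p}` for all `X ∈ L^1(c_p)` and `α n > 0` with
`∑ α n = 1`, then `P = ∑ α n • Q n` is a probability measure in the canonical
`c_p`-class: for every `X ≥ 0` in `L^1(c_p)`, `E_P(X) = 0` iff `X = 0` in `L^1(c_p)`. -/
theorem stmt18 {Ω : Type} [TopologicalSpace Ω] [PolishSpace Ω]
    [MeasurableSpace Ω] [BorelSpace Ω]
    (Ps : Set (Measure Ω)) (hprob : ∀ Q ∈ Ps, IsProbabilityMeasure Q)
    (hcomp : @IsCompact _ (WeakTop Ω) (@closure _ (WeakTop Ω) Ps))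
    (p : ℝ) (hp : 1 ≤ p)
    (Q : ℕ → Measure Ω) (hQprob : ∀ n, IsProbabilityMeasure (Q n))
    (hQrep : ∀ X : Ω → ℝ, MemL1e (cpExt Ps p) X →
      cpExt Ps p X = ⨆ n : ℕ, (∫⁻ x, (ENNReal.ofReal |X x|) ^ p ∂(Q n)) ^ (1 / p))
    (α : ℕ → ℝ≥0∞) (hα : ∀ n, 0 < α n) (hsum : (∑' n, α n) = 1) :
    IsProbabilityMeasure (Measure.sum fun n => α n • Q n) ∧
    ∀ X : Ω → ℝ, MemL1e (cpExt Ps p) X → NonnegL1e (cpExt Ps p) X →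
      ((∫⁻ x, ENNReal.ofReal (X x) ∂(Measure.sum fun n => α n • Q n)) = 0 ↔
        cpExt Ps p X = 0) :=
  stmt18_general Ps p hp Q hQprob hQrep α hα hsum
end

section
/- Let ρ be a normalized uniformly regular convex risk measure on a lattice L ⊆ C_b(Ω), and let ρ_1 be a regular sublinear risk measure on L majorizing ρ. Then c(X) := ρ_1(−|X|) defines a capacity on L, ρ_1 extends uniquely to a continuous sublinear risk measure on L^1(c), and ρ extends uniquely to a continuous normalized convex risk measure on L^1(c) majorized by the extension of ρ_1; moreover both ρ and ρ_1 are 1-Lipschitz for the seminorm c on L. -/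
open Filter Topology
open scoped ENNReal

/-- The capacity `c(X) = ρ₁(-|X|)` associated with a sublinear risk measure `ρ₁`. -/
noncomputable def capL {Ω : Type} (ρ1 : (Ω → ℝ) → ℝ) (f : Ω → ℝ) : ℝ :=
  ρ1 fun x => -|f x|

/-- Extension of `c = ρ₁(-|·|)` to non-negative lower semicontinuous functions:
`c(g) = sup {c(φ) : 0 ≤ φ ≤ g, φ ∈ L}`. -/
noncomputable def capLsc {Ω : Type} [TopologicalSpace Ω] (L : Set (Ω → ℝ)) (ρ1 : (Ω → ℝ) → ℝ)
    (g : Ω → ℝ) : ℝ≥0∞ :=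
  ⨆ φ ∈ {φ : Ω → ℝ | φ ∈ L ∧ ∀ x, 0 ≤ φ x ∧ φ x ≤ g x}, ENNReal.ofReal (capL ρ1 φ)

/-- Extension of `c = ρ₁(-|·|)` to arbitrary functions:
`c(h) = inf {c(f) : f ≥ |h|, f lower semicontinuous}`. -/
noncomputable def capExt {Ω : Type} [TopologicalSpace Ω] (L : Set (Ω → ℝ)) (ρ1 : (Ω → ℝ) → ℝ)
    (h : Ω → ℝ) : ℝ≥0∞ :=
  ⨅ f ∈ {f : Ω → ℝ | LowerSemicontinuous f ∧ ∀ x, |h x| ≤ f x}, capLsc L ρ1 f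

/-- Membership in `L^1(c)`: `c`-limit of elements of the lattice `L`. -/
def MemE {Ω : Type} [TopologicalSpace Ω] (L : Set (Ω → ℝ)) (ρ1 : (Ω → ℝ) → ℝ) (g : Ω → ℝ) : Prop :=
  ∃ f : ℕ → Ω → ℝ, (∀ n, f n ∈ L) ∧
    Tendsto (fun n => capExt L ρ1 (g - f n)) atTop (𝓝 0)

/-- `X ≥ 0` in `L^1(c)`: `c`-approximable by non-negative elements of `L`. -/
def NonnegE {Ω : Type} [TopologicalSpace Ω] (L : Set (Ω → ℝ)) (ρ1 : (Ω → ℝ) → ℝ) (g : Ω → ℝ) : Prop :=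
  ∃ f : ℕ → Ω → ℝ, (∀ n, f n ∈ L ∧ ∀ x, 0 ≤ f n x) ∧
    Tendsto (fun n => capExt L ρ1 (g - f n)) atTop (𝓝 0)

/-!
Convexity gives `ρ f - ρ g ≤ ρ₁ (f - g) ≤ ρ₁ (-|f - g|) = c (f - g)` on `L`: write `f` as a
convex combination of a multiple of `f - g` and of `(1 + ε) • g`, and let `ε ↓ 0`. Hence `ρ`
and `ρ₁` are `1`-Lipschitz for `c`.

The outer extension of `c` is subadditive. Since `L` generates the topology and `Ω` is
Lindelöf, every nonnegative lower semicontinuous `F` is the pointwise limit of an increasing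
sequence in `L` below it; if `φ ∈ L` and `|φ| ≤ F₁ + F₂`, the defects
`(|φ| - ψ₁ₖ - ψ₂ₖ)⁺ ∈ L` decrease to `0`, so regularity of `ρ₁` gives
`c φ ≤ c F₁ + c F₂`. With this triangle inequality, `ρ` and `ρ₁` are Cauchy along every
`c`-approximating sequence in `L`; their limits are the extensions, and each algebraic
property passes to the limit.
-/

section RiskMeasureExtension

variable {Ω : Type} {L : Set (Ω → ℝ)} {ρ1 : (Ω → ℝ) → ℝ}

structure IsFunctionLattice (L : Set (Ω → ℝ)) : Prop where
  const_mem : ∀ a : ℝ, (fun _ => a) ∈ L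
  add_mem : ∀ f ∈ L, ∀ g ∈ L, f + g ∈ L
  smul_mem : ∀ a : ℝ, ∀ f ∈ L, a • f ∈ L
  abs_mem : ∀ f ∈ L, (fun x => |f x|) ∈ L

namespace IsFunctionLattice

variable {f g : Ω → ℝ}

theorem zero_mem (hL : IsFunctionLattice L) : (0 : Ω → ℝ) ∈ L := hL.const_mem 0

theorem neg_mem (hL : IsFunctionLattice L) (hf : f ∈ L) : -f ∈ L := by
  simpa using hL.smul_mem (-1) f hf

theorem sub_mem (hL : IsFunctionLattice L) (hf : f ∈ L) (hg : g ∈ L) : f - g ∈ L := by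
  rw [sub_eq_add_neg]
  exact hL.add_mem f hf _ (hL.neg_mem hg)

theorem sup_mem (hL : IsFunctionLattice L) (hf : f ∈ L) (hg : g ∈ L) : f ⊔ g ∈ L := by
  rw [sup_eq_half_smul_add_add_abs_sub' ℝ]
  exact hL.smul_mem _ _ (hL.add_mem _ (hL.add_mem f hf g hg) _ (hL.abs_mem _ (hL.sub_mem hg hf)))

theorem inf_mem (hL : IsFunctionLattice L) (hf : f ∈ L) (hg : g ∈ L) : f ⊓ g ∈ L := by
  rw [← neg_neg (f ⊓ g), neg_inf]
  exact hL.neg_mem (hL.sup_mem (hL.neg_mem hf) (hL.neg_mem hg))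

theorem sum_mem (hL : IsFunctionLattice L) {ι : Type*} (s : Finset ι) {h : ι → Ω → ℝ}
    (hh : ∀ i ∈ s, h i ∈ L) : ∑ i ∈ s, h i ∈ L :=
  Finset.sum_induction _ (· ∈ L) (fun a b ha hb => hL.add_mem a ha b hb) hL.zero_mem hh

end IsFunctionLattice

structure IsAntitoneSublinear (L : Set (Ω → ℝ)) (ρ : (Ω → ℝ) → ℝ) : Prop where
  antitone : ∀ f ∈ L, ∀ g ∈ L, (∀ x, f x ≤ g x) → ρ g ≤ ρ f
  add_le : ∀ f ∈ L, ∀ g ∈ L, ρ (f + g) ≤ ρ f + ρ g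
  smul_eq : ∀ s : ℝ, 0 < s → ∀ f ∈ L, ρ (s • f) = s * ρ f

def IsRegularOn (L : Set (Ω → ℝ)) (ρ : (Ω → ℝ) → ℝ) : Prop :=
  ∀ X : ℕ → Ω → ℝ, (∀ n, X n ∈ L) → (∀ x, Antitone fun n => X n x) →
    (∀ x, Tendsto (fun n => X n x) atTop (𝓝 0)) → Tendsto (fun n => ρ (-(X n))) atTop (𝓝 0)

namespace IsAntitoneSublinear

theorem map_zero (hL : IsFunctionLattice L) (h1 : IsAntitoneSublinear L ρ1) : ρ1 0 = 0 := by
  have h := h1.smul_eq 2 two_pos 0 hL.zero_mem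
  rw [smul_zero] at h
  linarith

theorem sub_le_map_sub (hL : IsFunctionLattice L) (h1 : IsAntitoneSublinear L ρ1) {f g : Ω → ℝ}
    (hf : f ∈ L) (hg : g ∈ L) : ρ1 f - ρ1 g ≤ ρ1 (f - g) := by
  have h := h1.add_le g hg (f - g) (hL.sub_mem hf hg)
  rw [add_sub_cancel] at h
  linarith

end IsAntitoneSublinear

section Capacity

variable {φ f g : Ω → ℝ}

theorem capL_congr (h : ∀ x, |f x| = |g x|) : capL ρ1 f = capL ρ1 g := by
  simp only [capL, h]

theorem capL_sub_comm (f g : Ω → ℝ) : capL ρ1 (f - g) = capL ρ1 (g - f) :=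
  capL_congr fun x => abs_sub_comm (f x) (g x)

theorem capL_of_nonneg (hf : 0 ≤ f) : capL ρ1 f = ρ1 (-f) := by
  unfold capL
  congr 1
  funext x
  simp [abs_of_nonneg (hf x)]

theorem capL_nonneg (hL : IsFunctionLattice L) (h1 : IsAntitoneSublinear L ρ1) (hf : f ∈ L) :
    0 ≤ capL ρ1 f := by
  rw [← h1.map_zero hL]
  exact h1.antitone _ (hL.neg_mem (hL.abs_mem f hf)) 0 hL.zero_mem fun _ =>
    neg_nonpos.2 (abs_nonneg _)

theorem capL_mono (hL : IsFunctionLattice L) (h1 : IsAntitoneSublinear L ρ1) (hf : f ∈ L)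
    (hg : g ∈ L) (h : ∀ x, |f x| ≤ |g x|) : capL ρ1 f ≤ capL ρ1 g :=
  h1.antitone _ (hL.neg_mem (hL.abs_mem g hg)) _ (hL.neg_mem (hL.abs_mem f hf)) fun x =>
    neg_le_neg (h x)

theorem capL_le_add_of_abs_le (hL : IsFunctionLattice L) (h1 : IsAntitoneSublinear L ρ1)
    (hφ : φ ∈ L) (hf : f ∈ L) (hg : g ∈ L) (h : ∀ x, |φ x| ≤ |f x| + |g x|) :
    capL ρ1 φ ≤ capL ρ1 f + capL ρ1 g := by
  have hf' := hL.neg_mem (hL.abs_mem f hf)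
  have hg' := hL.neg_mem (hL.abs_mem g hg)
  calc capL ρ1 φ ≤ ρ1 (-(fun x => |f x|) + -(fun x => |g x|)) :=
        h1.antitone _ (hL.add_mem _ hf' _ hg') _ (hL.neg_mem (hL.abs_mem φ hφ)) fun x => by
          simp only [Pi.add_apply, Pi.neg_apply]
          linarith [h x]
    _ ≤ capL ρ1 f + capL ρ1 g := h1.add_le _ hf' _ hg'

theorem capL_add_le (hL : IsFunctionLattice L) (h1 : IsAntitoneSublinear L ρ1) (hf : f ∈ L)
    (hg : g ∈ L) : capL ρ1 (f + g) ≤ capL ρ1 f + capL ρ1 g :=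
  capL_le_add_of_abs_le hL h1 (hL.add_mem f hf g hg) hf hg fun _ => abs_add_le _ _

theorem capL_smul (hL : IsFunctionLattice L) (h1 : IsAntitoneSublinear L ρ1) (a : ℝ)
    (hf : f ∈ L) : capL ρ1 (a • f) = |a| * capL ρ1 f := by
  rcases eq_or_ne a 0 with rfl | ha
  · rw [zero_smul, capL_of_nonneg le_rfl, neg_zero, h1.map_zero hL, abs_zero, zero_mul]
  · have h : (fun x => -|(a • f) x|) = |a| • -(fun x => |f x|) := by
      funext x
      simp [abs_mul]
    rw [capL, h, h1.smul_eq _ (abs_pos.2 ha) _ (hL.neg_mem (hL.abs_mem f hf))]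
    rfl

theorem IsRegularOn.tendsto_capL (hreg : IsRegularOn L ρ1) {f : ℕ → Ω → ℝ} (hfL : ∀ n, f n ∈ L)
    (hanti : ∀ x, Antitone fun n => f n x) (hlim : ∀ x, Tendsto (fun n => f n x) atTop (𝓝 0)) :
    Tendsto (fun n => capL ρ1 (f n)) atTop (𝓝 0) := by
  have hnonneg : ∀ n, 0 ≤ f n := fun n x => (hanti x).le_of_tendsto (hlim x) n
  simpa only [capL_of_nonneg (hnonneg _)] using hreg f hfL hanti hlim

end Capacity

section Lipschitz

variable {ρ τ : (Ω → ℝ) → ℝ} {f g : Ω → ℝ}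

theorem map_le_map_sub_add_of_convex (hL : IsFunctionLattice L)
    (hhom : ∀ s : ℝ, 0 < s → ∀ f ∈ L, ρ1 (s • f) = s * ρ1 f)
    (hconv : ∀ f ∈ L, ∀ g ∈ L, ∀ s : ℝ, 0 ≤ s → s ≤ 1 →
      ρ (s • f + (1 - s) • g) ≤ s * ρ f + (1 - s) * ρ g)
    (hmaj : ∀ f ∈ L, ρ f ≤ ρ1 f) (hf : f ∈ L) (hg : g ∈ L) {ε : ℝ} (hε : 0 < ε)
    (hε1 : ε ≤ 1) :
    ρ f ≤ ρ1 (f - g) + (ε * ρ ((2 : ℝ) • g) + (1 - ε) * ρ g) / (1 + ε) := by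
  have hfg := hL.sub_mem hf hg
  have hε' : 0 < 1 + ε := by linarith
  have hs : 1 - ε / (1 + ε) = 1 / (1 + ε) := by field_simp; ring
  have hsplit : (ε / (1 + ε)) • (((1 + ε) / ε) • (f - g)) + (1 - ε / (1 + ε)) • ((1 + ε) • g)
      = f := by
    rw [hs]
    funext x
    simp only [Pi.add_apply, Pi.smul_apply, Pi.sub_apply, smul_eq_mul]
    field_simp
    ring
  have hcomb := hconv _ (hL.smul_mem ((1 + ε) / ε) _ hfg) _ (hL.smul_mem (1 + ε) g hg)
    (ε / (1 + ε)) (by positivity) ((div_le_one hε').2 (by linarith))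
  rw [hsplit, hs] at hcomb
  have hA : ρ (((1 + ε) / ε) • (f - g)) ≤ (1 + ε) / ε * ρ1 (f - g) := by
    rw [← hhom _ (by positivity) _ hfg]
    exact hmaj _ (hL.smul_mem _ _ hfg)
  have hB : ρ ((1 + ε) • g) ≤ ε * ρ ((2 : ℝ) • g) + (1 - ε) * ρ g := by
    have h := hconv _ (hL.smul_mem 2 g hg) g hg ε hε.le hε1
    rwa [show ε • ((2 : ℝ) • g) + (1 - ε) • g = (1 + ε) • g by module] at h
  calc ρ f ≤ ε / (1 + ε) * ((1 + ε) / ε * ρ1 (f - g))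
        + 1 / (1 + ε) * (ε * ρ ((2 : ℝ) • g) + (1 - ε) * ρ g) := by
        refine hcomb.trans (add_le_add ?_ ?_) <;> gcongr
    _ = _ := by field_simp

theorem sub_le_map_sub_of_convex (hL : IsFunctionLattice L)
    (hhom : ∀ s : ℝ, 0 < s → ∀ f ∈ L, ρ1 (s • f) = s * ρ1 f)
    (hconv : ∀ f ∈ L, ∀ g ∈ L, ∀ s : ℝ, 0 ≤ s → s ≤ 1 →
      ρ (s • f + (1 - s) • g) ≤ s * ρ f + (1 - s) * ρ g)
    (hmaj : ∀ f ∈ L, ρ f ≤ ρ1 f) (hf : f ∈ L) (hg : g ∈ L) :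
    ρ f - ρ g ≤ ρ1 (f - g) := by
  have hlim : Tendsto (fun ε : ℝ => ρ1 (f - g) + (ε * ρ ((2 : ℝ) • g) + (1 - ε) * ρ g) / (1 + ε))
      (𝓝[>] 0) (𝓝 (ρ1 (f - g) + ρ g)) := by
    have hc : ContinuousAt
        (fun ε : ℝ => ρ1 (f - g) + (ε * ρ ((2 : ℝ) • g) + (1 - ε) * ρ g) / (1 + ε)) 0 := by
      fun_prop (disch := norm_num)
    simpa using hc.tendsto.mono_left nhdsWithin_le_nhds
  have h := ge_of_tendsto hlim (by
    filter_upwards [Ioc_mem_nhdsGT one_pos] with ε hε using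
      map_le_map_sub_add_of_convex hL hhom hconv hmaj hf hg hε.1 hε.2)
  linarith

theorem abs_sub_le_capL_of_sub_le (hL : IsFunctionLattice L) (h1 : IsAntitoneSublinear L ρ1)
    (hτ : ∀ f ∈ L, ∀ g ∈ L, τ f - τ g ≤ ρ1 (f - g)) (hf : f ∈ L) (hg : g ∈ L) :
    |τ f - τ g| ≤ capL ρ1 (f - g) := by
  have hle : ∀ u ∈ L, ∀ v ∈ L, τ u - τ v ≤ capL ρ1 (u - v) := fun u hu v hv =>
    (hτ u hu v hv).trans (h1.antitone _ (hL.neg_mem (hL.abs_mem _ (hL.sub_mem hu hv))) _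
      (hL.sub_mem hu hv) fun x => neg_abs_le _)
  rw [abs_sub_le_iff]
  exact ⟨hle f hf g hg, (hle g hg f hf).trans_eq (capL_sub_comm g f)⟩

end Lipschitz

section Approximation

variable [t : TopologicalSpace Ω]

theorem exists_mem_nonneg_lt_one_imp_mem (hL : IsFunctionLattice L)
    (hgen : t = TopologicalSpace.induced (fun x (f : L) => f.1 x) Pi.topologicalSpace)
    {O : Set Ω} (hO : IsOpen O) {x0 : Ω} (hx0 : x0 ∈ O) :
    ∃ g ∈ L, 0 ≤ g ∧ g x0 = 0 ∧ ∀ x, g x < 1 → x ∈ O := by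
  rw [hgen] at hO
  obtain ⟨V, hV, rfl⟩ := isOpen_induced_iff.1 hO
  obtain ⟨I, u, hu, hIV⟩ := isOpen_pi_iff.1 hV _ hx0
  choose! ε hε hball using fun i (hi : i ∈ I) => Metric.isOpen_iff.1 (hu i hi).1 _ (hu i hi).2
  have hterm : ∀ i ∈ I, ∀ x, 0 ≤ (ε i)⁻¹ * |i.1 x - i.1 x0| := fun i hi x =>
    mul_nonneg (inv_nonneg.2 (hε i hi).le) (abs_nonneg _)
  refine ⟨∑ i ∈ I, (ε i)⁻¹ • fun x => |i.1 x - i.1 x0|,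
    hL.sum_mem I fun i _ => hL.smul_mem _ _ (hL.abs_mem _ (hL.sub_mem i.2 (hL.const_mem _))),
    fun x => ?_, by simp, fun x hx => hIV fun i hi => hball i hi ?_⟩
  · simpa using Finset.sum_nonneg fun i hi => hterm i hi x
  · have hle : (ε i)⁻¹ * |i.1 x - i.1 x0| < 1 := by
      refine lt_of_le_of_lt ?_ hx
      simpa using Finset.single_le_sum (fun j hj => hterm j hj x) hi
    rw [Metric.mem_ball, Real.dist_eq]
    rwa [inv_mul_lt_iff₀ (hε i hi), mul_one] at hle

theorem exists_mem_le_eventually_eq (hL : IsFunctionLattice L) (hcont : ∀ f ∈ L, Continuous f)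
    (hgen : t = TopologicalSpace.induced (fun x (f : L) => f.1 x) Pi.topologicalSpace)
    {F : Ω → ℝ} (hF : LowerSemicontinuous F) (hF0 : 0 ≤ F) {x0 : Ω} {c : ℝ} (hc : 0 < c)
    (hcF : c < F x0) : ∃ φ ∈ L, 0 ≤ φ ∧ φ ≤ F ∧ ∀ᶠ x in 𝓝 x0, φ x = c := by
  obtain ⟨g, hg, -, hgx0, hgO⟩ :=
    exists_mem_nonneg_lt_one_imp_mem hL hgen (hF.isOpen_preimage c) hcF
  set φ : Ω → ℝ := c • ((fun _ : Ω => (1 : ℝ)) ⊓ (((fun _ : Ω => (2 : ℝ)) - (2 : ℝ) • g) ⊔ 0))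
  have hφ : ∀ x, φ x = c * min 1 (max (2 - 2 * g x) 0) := fun x => rfl
  refine ⟨φ, hL.smul_mem c _ (hL.inf_mem (hL.const_mem 1)
    (hL.sup_mem (hL.sub_mem (hL.const_mem 2) (hL.smul_mem 2 g hg)) hL.zero_mem)),
    fun x => ?_, fun x => ?_, ?_⟩
  · rw [hφ]
    exact mul_nonneg hc.le (le_min zero_le_one (le_max_right _ _))
  · rw [hφ]
    by_cases hx : g x < 1
    · have hcx : c < F x := hgO x hx
      have : c * min 1 (max (2 - 2 * g x) 0) ≤ c * 1 :=
        mul_le_mul_of_nonneg_left (min_le_left _ _) hc.le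
      linarith
    · rw [max_eq_right (by linarith), min_eq_right zero_le_one, mul_zero]
      exact hF0 x
  · have hnear : ∀ᶠ x in 𝓝 x0, g x < 1 / 2 :=
      (hcont g hg).continuousAt.eventually (gt_mem_nhds (by rw [hgx0]; norm_num))
    filter_upwards [hnear] with x hx
    rw [hφ, max_eq_left (by linarith), min_eq_left (by linarith), mul_one]

theorem exists_countable_approx_of_lt [TopologicalSpace.MetrizableSpace Ω]
    [TopologicalSpace.SeparableSpace Ω] (hL : IsFunctionLattice L)
    (hcont : ∀ f ∈ L, Continuous f)
    (hgen : t = TopologicalSpace.induced (fun x (f : L) => f.1 x) Pi.topologicalSpace)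
    {F : Ω → ℝ} (hF : LowerSemicontinuous F) (hF0 : 0 ≤ F) {c : ℝ} (hc : 0 < c) :
    ∃ S : Set (Ω → ℝ), S.Countable ∧ (∀ φ ∈ S, φ ∈ L ∧ 0 ≤ φ ∧ φ ≤ F) ∧
      ∀ x, c < F x → ∃ φ ∈ S, c ≤ φ x := by
  let := TopologicalSpace.metrizableSpaceMetric Ω
  have := UniformSpace.secondCountable_of_separable Ω
  choose φ hφL hφ0 hφF hφc using fun x0 : {x | c < F x} =>
    exists_mem_le_eventually_eq hL hcont hgen hF hF0 hc x0.2
  obtain ⟨T, hT, hTU⟩ := TopologicalSpace.isOpen_iUnion_countable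
    (fun x0 => interior {x | φ x0 x = c}) fun _ => isOpen_interior
  refine ⟨φ '' T, hT.image φ, ?_, fun x hx => ?_⟩
  · rintro _ ⟨x0, -, rfl⟩
    exact ⟨hφL x0, hφ0 x0, hφF x0⟩
  · have hxU : x ∈ ⋃ x0, interior {x | φ x0 x = c} :=
      Set.mem_iUnion.2 ⟨⟨x, hx⟩, mem_interior_iff_mem_nhds.2 (hφc ⟨x, hx⟩)⟩
    rw [← hTU] at hxU
    obtain ⟨x0, hx0T, hx⟩ := Set.mem_iUnion₂.1 hxU
    have hφx : x ∈ {x | φ x0 x = c} := interior_subset hx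
    exact ⟨φ x0, ⟨x0, hx0T, rfl⟩, hφx.ge⟩

theorem exists_monotone_tendsto_of_lowerSemicontinuous [TopologicalSpace.MetrizableSpace Ω]
    [TopologicalSpace.SeparableSpace Ω] (hL : IsFunctionLattice L)
    (hcont : ∀ f ∈ L, Continuous f)
    (hgen : t = TopologicalSpace.induced (fun x (f : L) => f.1 x) Pi.topologicalSpace)
    {F : Ω → ℝ} (hF : LowerSemicontinuous F) (hF0 : 0 ≤ F) :
    ∃ ψ : ℕ → Ω → ℝ, (∀ n, ψ n ∈ L ∧ 0 ≤ ψ n ∧ ψ n ≤ F) ∧ Monotone ψ ∧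
      ∀ x, Tendsto (fun n => ψ n x) atTop (𝓝 (F x)) := by
  choose S hSc hS hSF using fun q : {q : ℚ // 0 < q} =>
    exists_countable_approx_of_lt hL hcont hgen hF hF0 (c := q) (by exact_mod_cast q.2)
  obtain ⟨e, he⟩ := ((Set.countable_iUnion hSc).insert 0).exists_eq_range ⟨0, Set.mem_insert _ _⟩
  have he_mem : ∀ n, e n ∈ L ∧ 0 ≤ e n ∧ e n ≤ F := by
    intro n
    have hn : e n ∈ insert 0 (⋃ q, S q) := he ▸ Set.mem_range_self n
    rcases hn with hn | hn
    · rw [hn]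
      exact ⟨hL.zero_mem, le_rfl, hF0⟩
    · obtain ⟨q, hq⟩ := Set.mem_iUnion.1 hn
      exact hS q _ hq
  refine ⟨fun n => partialSups e n, fun n => ⟨?_, ?_, ?_⟩, (partialSups e).monotone, fun x => ?_⟩
  · induction n with
    | zero => simpa using (he_mem 0).1
    | succ n ih => simpa [partialSups_add_one] using hL.sup_mem ih (he_mem (n + 1)).1
  · exact (he_mem 0).2.1.trans (le_partialSups_of_le e (Nat.zero_le n))
  · exact partialSups_le e n F fun m _ => (he_mem m).2.2
  refine tendsto_order.2 ⟨fun a ha => ?_, fun b hb => Eventually.of_forall fun n =>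
    lt_of_le_of_lt ((partialSups_le e n F fun m _ => (he_mem m).2.2) x) hb⟩
  rcases lt_or_ge a 0 with ha0 | ha0
  · exact Eventually.of_forall fun n =>
      ha0.trans_le ((he_mem 0).2.1.trans (le_partialSups_of_le e (Nat.zero_le n)) x)
  obtain ⟨q, haq, hqF⟩ := exists_rat_btwn ha
  have hq : 0 < q := by exact_mod_cast ha0.trans_lt haq
  obtain ⟨φ, hφS, hqφ⟩ := hSF ⟨q, hq⟩ x hqF
  obtain ⟨m, rfl⟩ : φ ∈ Set.range e :=
    he ▸ Set.mem_insert_of_mem _ (Set.mem_iUnion.2 ⟨⟨q, hq⟩, hφS⟩)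
  filter_upwards [eventually_ge_atTop m] with n hn
  exact haq.trans_le (hqφ.trans (le_partialSups_of_le e hn x))

end Approximation

section OuterCapacity

variable [t : TopologicalSpace Ω]

theorem ofReal_capL_le_capLsc {ψ F : Ω → ℝ} (hψ : ψ ∈ L) (hψ0 : 0 ≤ ψ) (hψF : ψ ≤ F) :
    ENNReal.ofReal (capL ρ1 ψ) ≤ capLsc L ρ1 F :=
  le_iSup₂ (f := fun φ (_ : φ ∈ {φ : Ω → ℝ | φ ∈ L ∧ ∀ x, 0 ≤ φ x ∧ φ x ≤ F x}) =>
    ENNReal.ofReal (capL ρ1 φ)) ψ ⟨hψ, fun x => ⟨hψ0 x, hψF x⟩⟩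

theorem ofReal_capL_le_capLsc_add_add (hL : IsFunctionLattice L)
    (h1 : IsAntitoneSublinear L ρ1) {φ ψ1 ψ2 θ F1 F2 : Ω → ℝ} (hφ : φ ∈ L) (hψ1 : ψ1 ∈ L)
    (hψ1₀ : 0 ≤ ψ1) (hψ1F : ψ1 ≤ F1) (hψ2 : ψ2 ∈ L) (hψ2₀ : 0 ≤ ψ2) (hψ2F : ψ2 ≤ F2)
    (hθ : θ ∈ L) (hle : ∀ x, |φ x| ≤ ψ1 x + ψ2 x + |θ x|) :
    ENNReal.ofReal (capL ρ1 φ) ≤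
      capLsc L ρ1 F1 + capLsc L ρ1 F2 + ENNReal.ofReal (capL ρ1 θ) := by
  have hsplit : capL ρ1 φ ≤ capL ρ1 ψ1 + capL ρ1 ψ2 + capL ρ1 θ :=
    (capL_le_add_of_abs_le hL h1 hφ (hL.add_mem _ hψ1 _ hψ2) hθ fun x => by
      rw [Pi.add_apply, abs_of_nonneg (add_nonneg (hψ1₀ x) (hψ2₀ x))]
      exact hle x).trans
      (add_le_add_left (capL_add_le hL h1 hψ1 hψ2) _)
  calc ENNReal.ofReal (capL ρ1 φ)
      ≤ ENNReal.ofReal (capL ρ1 ψ1) + ENNReal.ofReal (capL ρ1 ψ2)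
        + ENNReal.ofReal (capL ρ1 θ) := by
        rw [← ENNReal.ofReal_add (capL_nonneg hL h1 hψ1) (capL_nonneg hL h1 hψ2),
          ← ENNReal.ofReal_add (add_nonneg (capL_nonneg hL h1 hψ1) (capL_nonneg hL h1 hψ2))
            (capL_nonneg hL h1 hθ)]
        exact ENNReal.ofReal_le_ofReal hsplit
    _ ≤ _ := by
        gcongr
        · exact ofReal_capL_le_capLsc hψ1 hψ1₀ hψ1F
        · exact ofReal_capL_le_capLsc hψ2 hψ2₀ hψ2F

theorem ofReal_capL_le_capLsc_add [TopologicalSpace.MetrizableSpace Ω]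
    [TopologicalSpace.SeparableSpace Ω] (hL : IsFunctionLattice L)
    (h1 : IsAntitoneSublinear L ρ1) (hreg : IsRegularOn L ρ1) (hcont : ∀ f ∈ L, Continuous f)
    (hgen : t = TopologicalSpace.induced (fun x (f : L) => f.1 x) Pi.topologicalSpace)
    {φ F1 F2 : Ω → ℝ} (hφ : φ ∈ L) (hF1 : LowerSemicontinuous F1) (hF1₀ : 0 ≤ F1)
    (hF2 : LowerSemicontinuous F2) (hF2₀ : 0 ≤ F2) (hle : ∀ x, |φ x| ≤ F1 x + F2 x) :
    ENNReal.ofReal (capL ρ1 φ) ≤ capLsc L ρ1 F1 + capLsc L ρ1 F2 := by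
  obtain ⟨ψ1, hψ1, hψ1m, hψ1F⟩ :=
    exists_monotone_tendsto_of_lowerSemicontinuous hL hcont hgen hF1 hF1₀
  obtain ⟨ψ2, hψ2, hψ2m, hψ2F⟩ :=
    exists_monotone_tendsto_of_lowerSemicontinuous hL hcont hgen hF2 hF2₀
  set θ : ℕ → Ω → ℝ := fun k => ((fun x => |φ x|) - ψ1 k - ψ2 k) ⊔ 0
  have hθ : ∀ k x, θ k x = max (|φ x| - ψ1 k x - ψ2 k x) 0 := fun k x => rfl
  have hθL : ∀ k, θ k ∈ L := fun k =>
    hL.sup_mem (hL.sub_mem (hL.sub_mem (hL.abs_mem φ hφ) (hψ1 k).1) (hψ2 k).1) hL.zero_mem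
  have hθanti : ∀ x, Antitone fun k => θ k x := fun x k l hkl => by
    simp only [hθ]
    exact max_le_max (by linarith [hψ1m hkl x, hψ2m hkl x]) le_rfl
  have hθlim : ∀ x, Tendsto (fun k => θ k x) atTop (𝓝 0) := fun x => by
    have h := ((tendsto_const_nhds (x := |φ x|)).sub (hψ1F x)).sub (hψ2F x) |>.max
      (tendsto_const_nhds (x := (0 : ℝ)))
    rwa [max_eq_right (by linarith [hle x])] at h
  have hk : ∀ k, ENNReal.ofReal (capL ρ1 φ) ≤
      capLsc L ρ1 F1 + capLsc L ρ1 F2 + ENNReal.ofReal (capL ρ1 (θ k)) := fun k =>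
    ofReal_capL_le_capLsc_add_add hL h1 hφ (hψ1 k).1 (hψ1 k).2.1 (hψ1 k).2.2 (hψ2 k).1
      (hψ2 k).2.1 (hψ2 k).2.2 (hθL k) fun x => by
        rw [hθ, abs_of_nonneg (le_max_right (|φ x| - ψ1 k x - ψ2 k x) 0)]
        linarith [le_max_left (|φ x| - ψ1 k x - ψ2 k x) 0]
  have hθc : Tendsto (fun k => ENNReal.ofReal (capL ρ1 (θ k))) atTop (𝓝 0) := by
    simpa using ENNReal.tendsto_ofReal (hreg.tendsto_capL hθL hθanti hθlim)
  simpa using ge_of_tendsto' (tendsto_const_nhds.add hθc) hk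

theorem capLsc_add_le [TopologicalSpace.MetrizableSpace Ω] [TopologicalSpace.SeparableSpace Ω]
    (hL : IsFunctionLattice L) (h1 : IsAntitoneSublinear L ρ1) (hreg : IsRegularOn L ρ1)
    (hcont : ∀ f ∈ L, Continuous f)
    (hgen : t = TopologicalSpace.induced (fun x (f : L) => f.1 x) Pi.topologicalSpace)
    {F1 F2 : Ω → ℝ} (hF1 : LowerSemicontinuous F1) (hF1₀ : 0 ≤ F1)
    (hF2 : LowerSemicontinuous F2) (hF2₀ : 0 ≤ F2) :
    capLsc L ρ1 (F1 + F2) ≤ capLsc L ρ1 F1 + capLsc L ρ1 F2 :=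
  iSup₂_le fun _ hφ => ofReal_capL_le_capLsc_add hL h1 hreg hcont hgen hφ.1 hF1 hF1₀ hF2 hF2₀
    fun x => (abs_of_nonneg (hφ.2 x).1).trans_le (hφ.2 x).2

theorem capExt_add_le [TopologicalSpace.MetrizableSpace Ω] [TopologicalSpace.SeparableSpace Ω]
    (hL : IsFunctionLattice L) (h1 : IsAntitoneSublinear L ρ1) (hreg : IsRegularOn L ρ1)
    (hcont : ∀ f ∈ L, Continuous f)
    (hgen : t = TopologicalSpace.induced (fun x (f : L) => f.1 x) Pi.topologicalSpace)
    (g1 g2 : Ω → ℝ) : capExt L ρ1 (g1 + g2) ≤ capExt L ρ1 g1 + capExt L ρ1 g2 := by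
  simp only [capExt, ENNReal.iInf_add, ENNReal.add_iInf]
  refine le_iInf₂ fun F2 hF2 => le_iInf₂ fun F1 hF1 => ?_
  have hF1₀ : 0 ≤ F1 := fun x => (abs_nonneg _).trans (hF1.2 x)
  have hF2₀ : 0 ≤ F2 := fun x => (abs_nonneg _).trans (hF2.2 x)
  refine (iInf₂_le (F1 + F2) ⟨hF1.1.add hF2.1, fun x => ?_⟩).trans
    (capLsc_add_le hL h1 hreg hcont hgen hF1.1 hF1₀ hF2.1 hF2₀)
  exact (abs_add_le _ _).trans (add_le_add (hF1.2 x) (hF2.2 x))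

theorem capExt_mono {g1 g2 : Ω → ℝ} (h : ∀ x, |g1 x| ≤ |g2 x|) :
    capExt L ρ1 g1 ≤ capExt L ρ1 g2 :=
  le_iInf₂ fun F hF => iInf₂_le F ⟨hF.1, fun x => (h x).trans (hF.2 x)⟩

theorem capExt_sub_comm (g1 g2 : Ω → ℝ) : capExt L ρ1 (g1 - g2) = capExt L ρ1 (g2 - g1) :=
  le_antisymm (capExt_mono fun _ => (abs_sub_comm _ _).le)
    (capExt_mono fun _ => (abs_sub_comm _ _).le)

theorem capExt_eq_ofReal_capL (hL : IsFunctionLattice L) (h1 : IsAntitoneSublinear L ρ1)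
    (hcont : ∀ f ∈ L, Continuous f) {f : Ω → ℝ} (hf : f ∈ L) :
    capExt L ρ1 f = ENNReal.ofReal (capL ρ1 f) := by
  refine le_antisymm ?_ (le_iInf₂ fun F hF => ?_)
  · refine (iInf₂_le _ ⟨(hcont f hf).abs.lowerSemicontinuous, fun x => le_rfl⟩).trans
      (iSup₂_le fun ψ hψ => ENNReal.ofReal_le_ofReal (capL_mono hL h1 hψ.1 hf fun x => ?_))
    rw [abs_of_nonneg (hψ.2 x).1]
    exact (hψ.2 x).2
  · rw [capL_congr (g := fun x => |f x|) fun x => (abs_abs (f x)).symm]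
    exact ofReal_capL_le_capLsc (hL.abs_mem f hf) (fun x => abs_nonneg _) hF.2

theorem capExt_zero (hL : IsFunctionLattice L) (h1 : IsAntitoneSublinear L ρ1)
    (hcont : ∀ f ∈ L, Continuous f) : capExt L ρ1 0 = 0 := by
  rw [capExt_eq_ofReal_capL hL h1 hcont hL.zero_mem, capL_of_nonneg le_rfl, neg_zero,
    h1.map_zero hL, ENNReal.ofReal_zero]

theorem ofReal_abs_sub_le_capExt (hL : IsFunctionLattice L) (h1 : IsAntitoneSublinear L ρ1)
    (hcont : ∀ f ∈ L, Continuous f) {τ : (Ω → ℝ) → ℝ}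
    (hτ : ∀ f ∈ L, ∀ g ∈ L, |τ f - τ g| ≤ capL ρ1 (f - g)) :
    ∀ f ∈ L, ∀ g ∈ L, ENNReal.ofReal |τ f - τ g| ≤ capExt L ρ1 (f - g) := fun f hf g hg => by
  rw [capExt_eq_ofReal_capL hL h1 hcont (hL.sub_mem hf hg)]
  exact ENNReal.ofReal_le_ofReal (hτ f hf g hg)

end OuterCapacity

section Extension

variable [TopologicalSpace Ω]

theorem memE_of_mem (hzero : capExt L ρ1 0 = 0) {f : Ω → ℝ} (hf : f ∈ L) : MemE L ρ1 f :=
  ⟨fun _ => f, fun _ => hf, by simp [hzero]⟩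

theorem capExt_nsmul_le
    (hadd : ∀ g1 g2 : Ω → ℝ, capExt L ρ1 (g1 + g2) ≤ capExt L ρ1 g1 + capExt L ρ1 g2)
    (hzero : capExt L ρ1 0 = 0) (m : ℕ) (g : Ω → ℝ) :
    capExt L ρ1 ((m : ℝ) • g) ≤ m * capExt L ρ1 g := by
  induction m with
  | zero => simp [hzero]
  | succ m ih =>
    rw [Nat.cast_succ, add_smul, one_smul, Nat.cast_succ, add_mul, one_mul]
    exact (hadd _ _).trans (add_le_add_left ih _)

-- Only subadditivity of `capExt` is available, hence the integer factor.
theorem capExt_smul_le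
    (hadd : ∀ g1 g2 : Ω → ℝ, capExt L ρ1 (g1 + g2) ≤ capExt L ρ1 g1 + capExt L ρ1 g2)
    (hzero : capExt L ρ1 0 = 0) (a : ℝ) (g : Ω → ℝ) :
    capExt L ρ1 (a • g) ≤ ⌈|a|⌉₊ * capExt L ρ1 g := by
  refine (capExt_mono fun x => ?_).trans (capExt_nsmul_le hadd hzero ⌈|a|⌉₊ g)
  simp only [Pi.smul_apply, smul_eq_mul, abs_mul, Nat.abs_cast]
  exact mul_le_mul_of_nonneg_right (Nat.le_ceil |a|) (abs_nonneg _)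

theorem tendsto_capExt_smul_add_smul
    (hadd : ∀ g1 g2 : Ω → ℝ, capExt L ρ1 (g1 + g2) ≤ capExt L ρ1 g1 + capExt L ρ1 g2)
    (hzero : capExt L ρ1 0 = 0) {X Y : Ω → ℝ} {u v : ℕ → Ω → ℝ}
    (hXu : Tendsto (fun n => capExt L ρ1 (X - u n)) atTop (𝓝 0))
    (hYv : Tendsto (fun n => capExt L ρ1 (Y - v n)) atTop (𝓝 0)) (a b : ℝ) :
    Tendsto (fun n => capExt L ρ1 ((a • X + b • Y) - (a • u n + b • v n))) atTop (𝓝 0) := by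
  have hlim : Tendsto (fun n => ⌈|a|⌉₊ * capExt L ρ1 (X - u n) + ⌈|b|⌉₊ * capExt L ρ1 (Y - v n))
      atTop (𝓝 0) := by
    simpa using (ENNReal.Tendsto.const_mul hXu (Or.inr (ENNReal.natCast_ne_top _))).add
      (ENNReal.Tendsto.const_mul hYv (Or.inr (ENNReal.natCast_ne_top _)))
  refine tendsto_of_tendsto_of_tendsto_of_le_of_le tendsto_const_nhds hlim (fun _ => zero_le)
    fun n => ?_
  rw [show (a • X + b • Y) - (a • u n + b • v n) = a • (X - u n) + b • (Y - v n) by module]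
  exact (hadd _ _).trans
    (add_le_add (capExt_smul_le hadd hzero a _) (capExt_smul_le hadd hzero b _))

theorem tendsto_sub_of_tendsto_capExt
    (hadd : ∀ g1 g2 : Ω → ℝ, capExt L ρ1 (g1 + g2) ≤ capExt L ρ1 g1 + capExt L ρ1 g2)
    {ι : Type*} {l : Filter ι} {τ : (Ω → ℝ) → ℝ}
    (hlip : ∀ f ∈ L, ∀ g ∈ L, ENNReal.ofReal |τ f - τ g| ≤ capExt L ρ1 (f - g))
    {X : Ω → ℝ} {u v : ι → Ω → ℝ} (hu : ∀ i, u i ∈ L) (hv : ∀ i, v i ∈ L)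
    (hXu : Tendsto (fun i => capExt L ρ1 (X - u i)) l (𝓝 0))
    (hXv : Tendsto (fun i => capExt L ρ1 (X - v i)) l (𝓝 0)) :
    Tendsto (fun i => τ (u i) - τ (v i)) l (𝓝 0) := by
  rw [tendsto_zero_iff_enorm_tendsto_zero]
  simp only [Real.enorm_eq_ofReal_abs]
  refine tendsto_of_tendsto_of_tendsto_of_le_of_le tendsto_const_nhds (by simpa using hXu.add hXv)
    (fun _ => zero_le) fun i => ?_
  calc ENNReal.ofReal |τ (u i) - τ (v i)| ≤ capExt L ρ1 (u i - v i) := hlip _ (hu i) _ (hv i)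
    _ ≤ capExt L ρ1 (u i - X) + capExt L ρ1 (X - v i) := by
        simpa using hadd (u i - X) (X - v i)
    _ = capExt L ρ1 (X - u i) + capExt L ρ1 (X - v i) := by rw [capExt_sub_comm]

def IsCapLimitExtension (L : Set (Ω → ℝ)) (ρ1 τ τb : (Ω → ℝ) → ℝ) : Prop :=
  ∀ (X : Ω → ℝ) (u : ℕ → Ω → ℝ), (∀ n, u n ∈ L) →
    Tendsto (fun n => capExt L ρ1 (X - u n)) atTop (𝓝 0) →
      Tendsto (fun n => τ (u n)) atTop (𝓝 (τb X))

theorem exists_isCapLimitExtension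
    (hadd : ∀ g1 g2 : Ω → ℝ, capExt L ρ1 (g1 + g2) ≤ capExt L ρ1 g1 + capExt L ρ1 g2)
    {τ : (Ω → ℝ) → ℝ}
    (hlip : ∀ f ∈ L, ∀ g ∈ L, ENNReal.ofReal |τ f - τ g| ≤ capExt L ρ1 (f - g)) :
    ∃ τb, IsCapLimitExtension L ρ1 τ τb := by
  suffices ∀ X, ∃ l : ℝ, ∀ u : ℕ → Ω → ℝ, (∀ n, u n ∈ L) →
      Tendsto (fun n => capExt L ρ1 (X - u n)) atTop (𝓝 0) →
      Tendsto (fun n => τ (u n)) atTop (𝓝 l) by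
    choose τb hτb using this
    exact ⟨τb, hτb⟩
  intro X
  by_cases hX : MemE L ρ1 X
  swap
  · exact ⟨0, fun u hu hXu => absurd ⟨u, hu, hXu⟩ hX⟩
  obtain ⟨s, hs, hXs⟩ := hX
  have hcauchy : CauchySeq fun n => τ (s n) := by
    rw [cauchySeq_iff_tendsto_dist_atTop_0, ← prod_atTop_atTop_eq]
    simpa [Real.dist_eq] using (tendsto_sub_of_tendsto_capExt hadd hlip (fun p : ℕ × ℕ => hs p.1)
      (fun p : ℕ × ℕ => hs p.2) (hXs.comp tendsto_fst) (hXs.comp tendsto_snd)).abs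
  obtain ⟨l, hl⟩ := cauchySeq_tendsto_of_complete hcauchy
  refine ⟨l, fun u hu hXu => ?_⟩
  simpa using (tendsto_sub_of_tendsto_capExt hadd hlip hu hs hXu hXs).add hl

namespace IsCapLimitExtension

variable {τ τb : (Ω → ℝ) → ℝ} {X Y : Ω → ℝ}

theorem eq_of_mem (h : IsCapLimitExtension L ρ1 τ τb) (hzero : capExt L ρ1 0 = 0) {f : Ω → ℝ}
    (hf : f ∈ L) : τb f = τ f :=
  tendsto_nhds_unique (h f (fun _ => f) (fun _ => hf) (by simp [hzero])) tendsto_const_nhds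

theorem ofReal_abs_sub_le (h : IsCapLimitExtension L ρ1 τ τb)
    (hadd : ∀ g1 g2 : Ω → ℝ, capExt L ρ1 (g1 + g2) ≤ capExt L ρ1 g1 + capExt L ρ1 g2)
    (hlip : ∀ f ∈ L, ∀ g ∈ L, ENNReal.ofReal |τ f - τ g| ≤ capExt L ρ1 (f - g))
    (hX : MemE L ρ1 X) (hY : MemE L ρ1 Y) :
    ENNReal.ofReal |τb X - τb Y| ≤ capExt L ρ1 (X - Y) := by
  obtain ⟨u, hu, hXu⟩ := hX
  obtain ⟨v, hv, hYv⟩ := hY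
  refine le_of_tendsto_of_tendsto' (ENNReal.tendsto_ofReal ((h X u hu hXu).sub (h Y v hv hYv)).abs)
    (by simpa using (hXu.add (tendsto_const_nhds (x := capExt L ρ1 (X - Y)))).add hYv) fun n => ?_
  calc ENNReal.ofReal |τ (u n) - τ (v n)| ≤ capExt L ρ1 ((u n - X) + ((X - Y) + (Y - v n))) := by
        simpa using hlip _ (hu n) _ (hv n)
    _ ≤ capExt L ρ1 (u n - X) + (capExt L ρ1 (X - Y) + capExt L ρ1 (Y - v n)) :=
        (hadd _ _).trans (add_le_add le_rfl (hadd _ _))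
    _ = _ := by rw [capExt_sub_comm, add_assoc]

theorem le_of_le {τ' τb' : (Ω → ℝ) → ℝ} (h : IsCapLimitExtension L ρ1 τ τb)
    (h' : IsCapLimitExtension L ρ1 τ' τb') (hle : ∀ f ∈ L, τ f ≤ τ' f) (hX : MemE L ρ1 X) :
    τb X ≤ τb' X := by
  obtain ⟨u, hu, hXu⟩ := hX
  exact le_of_tendsto_of_tendsto' (h X u hu hXu) (h' X u hu hXu) fun n => hle _ (hu n)

theorem tendsto_smul_add_smul (h : IsCapLimitExtension L ρ1 τ τb) (hL : IsFunctionLattice L)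
    (hadd : ∀ g1 g2 : Ω → ℝ, capExt L ρ1 (g1 + g2) ≤ capExt L ρ1 g1 + capExt L ρ1 g2)
    (hzero : capExt L ρ1 0 = 0) {u v : ℕ → Ω → ℝ} (hu : ∀ n, u n ∈ L) (hv : ∀ n, v n ∈ L)
    (hXu : Tendsto (fun n => capExt L ρ1 (X - u n)) atTop (𝓝 0))
    (hYv : Tendsto (fun n => capExt L ρ1 (Y - v n)) atTop (𝓝 0)) (a b : ℝ) :
    Tendsto (fun n => τ (a • u n + b • v n)) atTop (𝓝 (τb (a • X + b • Y))) :=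
  h _ _ (fun n => hL.add_mem _ (hL.smul_mem a _ (hu n)) _ (hL.smul_mem b _ (hv n)))
    (tendsto_capExt_smul_add_smul hadd hzero hXu hYv a b)

theorem antitone (h : IsCapLimitExtension L ρ1 τ τb) (hL : IsFunctionLattice L)
    (hadd : ∀ g1 g2 : Ω → ℝ, capExt L ρ1 (g1 + g2) ≤ capExt L ρ1 g1 + capExt L ρ1 g2)
    (hzero : capExt L ρ1 0 = 0) (hmono : ∀ f ∈ L, ∀ g ∈ L, (∀ x, f x ≤ g x) → τ g ≤ τ f)
    (hX : MemE L ρ1 X) (hXY : NonnegE L ρ1 (Y - X)) : τb Y ≤ τb X := by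
  obtain ⟨u, hu, hXu⟩ := hX
  obtain ⟨w, hw, hw_lim⟩ := hXY
  have hY := h.tendsto_smul_add_smul hL hadd hzero hu (fun n => (hw n).1) hXu hw_lim 1 1
  simp only [one_smul, add_sub_cancel] at hY
  exact le_of_tendsto_of_tendsto' hY (h X u hu hXu) fun n =>
    hmono _ (hu n) _ (hL.add_mem _ (hu n) _ (hw n).1) fun x => le_add_of_nonneg_right ((hw n).2 x)

theorem convex (h : IsCapLimitExtension L ρ1 τ τb) (hL : IsFunctionLattice L)
    (hadd : ∀ g1 g2 : Ω → ℝ, capExt L ρ1 (g1 + g2) ≤ capExt L ρ1 g1 + capExt L ρ1 g2)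
    (hzero : capExt L ρ1 0 = 0)
    (hconv : ∀ f ∈ L, ∀ g ∈ L, ∀ s : ℝ, 0 ≤ s → s ≤ 1 →
      τ (s • f + (1 - s) • g) ≤ s * τ f + (1 - s) * τ g)
    (hX : MemE L ρ1 X) (hY : MemE L ρ1 Y) {s : ℝ} (hs0 : 0 ≤ s) (hs1 : s ≤ 1) :
    τb (s • X + (1 - s) • Y) ≤ s * τb X + (1 - s) * τb Y := by
  obtain ⟨u, hu, hXu⟩ := hX
  obtain ⟨v, hv, hYv⟩ := hY
  exact le_of_tendsto_of_tendsto' (h.tendsto_smul_add_smul hL hadd hzero hu hv hXu hYv s (1 - s))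
    (((h X u hu hXu).const_mul s).add ((h Y v hv hYv).const_mul (1 - s))) fun n =>
      hconv _ (hu n) _ (hv n) s hs0 hs1

theorem add_le (h : IsCapLimitExtension L ρ1 τ τb) (hL : IsFunctionLattice L)
    (hadd : ∀ g1 g2 : Ω → ℝ, capExt L ρ1 (g1 + g2) ≤ capExt L ρ1 g1 + capExt L ρ1 g2)
    (hzero : capExt L ρ1 0 = 0) (hsub : ∀ f ∈ L, ∀ g ∈ L, τ (f + g) ≤ τ f + τ g)
    (hX : MemE L ρ1 X) (hY : MemE L ρ1 Y) : τb (X + Y) ≤ τb X + τb Y := by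
  obtain ⟨u, hu, hXu⟩ := hX
  obtain ⟨v, hv, hYv⟩ := hY
  have hXY := h.tendsto_smul_add_smul hL hadd hzero hu hv hXu hYv 1 1
  simp only [one_smul] at hXY
  exact le_of_tendsto_of_tendsto' hXY ((h X u hu hXu).add (h Y v hv hYv)) fun n =>
    hsub _ (hu n) _ (hv n)

theorem smul_eq (h : IsCapLimitExtension L ρ1 τ τb) (hL : IsFunctionLattice L)
    (hadd : ∀ g1 g2 : Ω → ℝ, capExt L ρ1 (g1 + g2) ≤ capExt L ρ1 g1 + capExt L ρ1 g2)
    (hzero : capExt L ρ1 0 = 0) (hhom : ∀ s : ℝ, 0 < s → ∀ f ∈ L, τ (s • f) = s * τ f)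
    {s : ℝ} (hs : 0 < s) (hX : MemE L ρ1 X) : τb (s • X) = s * τb X := by
  obtain ⟨u, hu, hXu⟩ := hX
  have hsX := h.tendsto_smul_add_smul hL hadd hzero hu hu hXu hXu s 0
  simp only [zero_smul, add_zero] at hsX
  exact tendsto_nhds_unique hsX
    (((h X u hu hXu).const_mul s).congr fun n => (hhom s hs _ (hu n)).symm)

theorem add_const (h : IsCapLimitExtension L ρ1 τ τb) (hL : IsFunctionLattice L)
    (hcash : ∀ f ∈ L, ∀ a : ℝ, τ (f + fun _ => a) = τ f - a) (hX : MemE L ρ1 X) (a : ℝ) :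
    τb (X + fun _ => a) = τb X - a := by
  obtain ⟨u, hu, hXu⟩ := hX
  have hXa := h (X + fun _ => a) (fun n => u n + fun _ => a)
    (fun n => hL.add_mem _ (hu n) _ (hL.const_mem a))
    (by simpa only [add_sub_add_right_eq_sub] using hXu)
  exact tendsto_nhds_unique hXa
    (((h X u hu hXu).sub_const a).congr fun n => (hcash _ (hu n) a).symm)

theorem eq_of_tendsto (h : IsCapLimitExtension L ρ1 τ τb) (hzero : capExt L ρ1 0 = 0)
    {ρ' : (Ω → ℝ) → ℝ} (hρ' : ∀ f ∈ L, ρ' f = τ f)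
    (hcont : ∀ X : Ω → ℝ, MemE L ρ1 X → ∀ fn : ℕ → Ω → ℝ, (∀ n, MemE L ρ1 (fn n)) →
      Tendsto (fun n => capExt L ρ1 (X - fn n)) atTop (𝓝 0) →
      Tendsto (fun n => ρ' (fn n)) atTop (𝓝 (ρ' X)))
    (hX : MemE L ρ1 X) : ρ' X = τb X := by
  obtain ⟨u, hu, hXu⟩ := id hX
  exact tendsto_nhds_unique
    ((hcont X hX u (fun n => memE_of_mem hzero (hu n)) hXu).congr fun n => hρ' _ (hu n))
    (h X u hu hXu)

end IsCapLimitExtension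

end Extension

end RiskMeasureExtension

theorem stmt19_general {Ω : Type} [t : TopologicalSpace Ω] [TopologicalSpace.MetrizableSpace Ω]
    [TopologicalSpace.SeparableSpace Ω]
    (L : Set (Ω → ℝ))
    (hLc : ∀ f ∈ L, Continuous f ∧ ∃ M : ℝ, ∀ x, |f x| ≤ M)
    (hLconst : ∀ a : ℝ, (fun _ => a) ∈ L)
    (hLadd : ∀ f ∈ L, ∀ g ∈ L, f + g ∈ L)
    (hLsmul : ∀ (a : ℝ), ∀ f ∈ L, a • f ∈ L)
    (hLabs : ∀ f ∈ L, (fun x => |f x|) ∈ L)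
    (hgen : t = TopologicalSpace.induced (fun x (f : L) => f.1 x) Pi.topologicalSpace)
    (ρ ρ1 : (Ω → ℝ) → ℝ)
    -- ρ is a normalized convex risk measure on L
    (hρmono : ∀ f ∈ L, ∀ g ∈ L, (∀ x, f x ≤ g x) → ρ g ≤ ρ f)
    (hρconv : ∀ f ∈ L, ∀ g ∈ L, ∀ s : ℝ, 0 ≤ s → s ≤ 1 →
      ρ (s • f + (1 - s) • g) ≤ s * ρ f + (1 - s) * ρ g)
    (hρcash : ∀ f ∈ L, ∀ a : ℝ, ρ (f + fun _ => a) = ρ f - a)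
    (hρ0 : ρ 0 = 0)
    -- ρ1 is a regular sublinear risk measure majorizing ρ
    (hρ1mono : ∀ f ∈ L, ∀ g ∈ L, (∀ x, f x ≤ g x) → ρ1 g ≤ ρ1 f)
    (hρ1cash : ∀ f ∈ L, ∀ a : ℝ, ρ1 (f + fun _ => a) = ρ1 f - a)
    (hρ1sub : ∀ f ∈ L, ∀ g ∈ L, ρ1 (f + g) ≤ ρ1 f + ρ1 g)
    (hρ1hom : ∀ s : ℝ, 0 < s → ∀ f ∈ L, ρ1 (s • f) = s * ρ1 f)
    (hρ1reg : ∀ X : ℕ → Ω → ℝ, (∀ n, X n ∈ L) → (∀ x, Antitone fun n => X n x) →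
      (∀ x, Tendsto (fun n => X n x) atTop (𝓝 0)) →
      Tendsto (fun n => ρ1 (-(X n))) atTop (𝓝 0))
    (hmaj : ∀ f ∈ L, ρ f ≤ ρ1 f) :
    -- (A) `c = ρ₁(-|·|)` is a capacity on L
    ((∀ f ∈ L, 0 ≤ capL ρ1 f) ∧
      (∀ f ∈ L, ∀ g ∈ L, capL ρ1 (f + g) ≤ capL ρ1 f + capL ρ1 g) ∧
      (∀ (a : ℝ), ∀ f ∈ L, capL ρ1 (a • f) = |a| * capL ρ1 f) ∧
      (∀ f ∈ L, ∀ g ∈ L, (∀ x, |f x| ≤ |g x|) → capL ρ1 f ≤ capL ρ1 g) ∧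
      (∀ f : ℕ → Ω → ℝ, (∀ n, f n ∈ L) → (∀ x, Antitone fun n => f n x) →
        (∀ x, Tendsto (fun n => f n x) atTop (𝓝 0)) →
        Tendsto (fun n => capL ρ1 (f n)) atTop (𝓝 0))) ∧
    -- (B) ρ and ρ₁ are 1-Lipschitz for the seminorm c on L
    (∀ f ∈ L, ∀ g ∈ L,
      |ρ f - ρ g| ≤ capL ρ1 (f - g) ∧ |ρ1 f - ρ1 g| ≤ capL ρ1 (f - g)) ∧
    -- (C) unique continuous extensions to `L^1(c)`
    (∃ ρb ρ1b : (Ω → ℝ) → ℝ,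
      (∀ f ∈ L, ρb f = ρ f ∧ ρ1b f = ρ1 f) ∧
      -- both extensions are 1-Lipschitz w.r.t. the extended capacity
      (∀ X Y : Ω → ℝ, MemE L ρ1 X → MemE L ρ1 Y →
        ENNReal.ofReal |ρb X - ρb Y| ≤ capExt L ρ1 (X - Y) ∧
        ENNReal.ofReal |ρ1b X - ρ1b Y| ≤ capExt L ρ1 (X - Y)) ∧
      -- ρb is a normalized convex risk measure on `L^1(c)` majorized by ρ1b
      ρb 0 = 0 ∧
      (∀ X Y : Ω → ℝ, MemE L ρ1 X → MemE L ρ1 Y → NonnegE L ρ1 (Y - X) → ρb Y ≤ ρb X) ∧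
      (∀ X Y : Ω → ℝ, MemE L ρ1 X → MemE L ρ1 Y → ∀ s : ℝ, 0 ≤ s → s ≤ 1 →
        ρb (s • X + (1 - s) • Y) ≤ s * ρb X + (1 - s) * ρb Y) ∧
      (∀ X : Ω → ℝ, MemE L ρ1 X → ∀ a : ℝ, ρb (X + fun _ => a) = ρb X - a) ∧
      -- ρ1b is a sublinear risk measure on `L^1(c)`
      (∀ X Y : Ω → ℝ, MemE L ρ1 X → MemE L ρ1 Y → NonnegE L ρ1 (Y - X) → ρ1b Y ≤ ρ1b X) ∧
      (∀ X Y : Ω → ℝ, MemE L ρ1 X → MemE L ρ1 Y → ρ1b (X + Y) ≤ ρ1b X + ρ1b Y) ∧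
      (∀ s : ℝ, 0 < s → ∀ X : Ω → ℝ, MemE L ρ1 X → ρ1b (s • X) = s * ρ1b X) ∧
      (∀ X : Ω → ℝ, MemE L ρ1 X → ∀ a : ℝ, ρ1b (X + fun _ => a) = ρ1b X - a) ∧
      (∀ X : Ω → ℝ, MemE L ρ1 X → ρb X ≤ ρ1b X) ∧
      -- uniqueness of the continuous extensions
      (∀ ρ' : (Ω → ℝ) → ℝ, (∀ f ∈ L, ρ' f = ρ f) →
        (∀ (X : Ω → ℝ), MemE L ρ1 X → ∀ fn : ℕ → Ω → ℝ, (∀ n, MemE L ρ1 (fn n)) →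
          Tendsto (fun n => capExt L ρ1 (X - fn n)) atTop (𝓝 0) →
          Tendsto (fun n => ρ' (fn n)) atTop (𝓝 (ρ' X))) →
        ∀ X : Ω → ℝ, MemE L ρ1 X → ρ' X = ρb X) ∧
      (∀ ρ' : (Ω → ℝ) → ℝ, (∀ f ∈ L, ρ' f = ρ1 f) →
        (∀ (X : Ω → ℝ), MemE L ρ1 X → ∀ fn : ℕ → Ω → ℝ, (∀ n, MemE L ρ1 (fn n)) →
          Tendsto (fun n => capExt L ρ1 (X - fn n)) atTop (𝓝 0) →
          Tendsto (fun n => ρ' (fn n)) atTop (𝓝 (ρ' X))) →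
        ∀ X : Ω → ℝ, MemE L ρ1 X → ρ' X = ρ1b X)) := by
  have hL : IsFunctionLattice L := ⟨hLconst, hLadd, hLsmul, hLabs⟩
  have h1 : IsAntitoneSublinear L ρ1 := ⟨hρ1mono, hρ1sub, hρ1hom⟩
  have hreg : IsRegularOn L ρ1 := hρ1reg
  have hcont : ∀ f ∈ L, Continuous f := fun f hf => (hLc f hf).1
  have hzero := capExt_zero hL h1 hcont
  have hadd := capExt_add_le hL h1 hreg hcont hgen
  have hlipρ : ∀ f ∈ L, ∀ g ∈ L, |ρ f - ρ g| ≤ capL ρ1 (f - g) :=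
    fun f hf g hg => abs_sub_le_capL_of_sub_le hL h1
      (fun _ hu _ hv => sub_le_map_sub_of_convex hL hρ1hom hρconv hmaj hu hv) hf hg
  have hlipρ1 : ∀ f ∈ L, ∀ g ∈ L, |ρ1 f - ρ1 g| ≤ capL ρ1 (f - g) :=
    fun f hf g hg => abs_sub_le_capL_of_sub_le hL h1
      (fun _ hu _ hv => h1.sub_le_map_sub hL hu hv) hf hg
  have hlipρ' := ofReal_abs_sub_le_capExt hL h1 hcont hlipρ
  have hlipρ1' := ofReal_abs_sub_le_capExt hL h1 hcont hlipρ1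
  obtain ⟨ρb, hρb⟩ := exists_isCapLimitExtension hadd hlipρ'
  obtain ⟨ρ1b, hρ1b⟩ := exists_isCapLimitExtension hadd hlipρ1'
  refine ⟨⟨fun f hf => capL_nonneg hL h1 hf, fun f hf g hg => capL_add_le hL h1 hf hg,
      fun a f hf => capL_smul hL h1 a hf, fun f hf g hg => capL_mono hL h1 hf hg,
      fun f hfL hanti hlim => hreg.tendsto_capL hfL hanti hlim⟩,
    fun f hf g hg => ⟨hlipρ f hf g hg, hlipρ1 f hf g hg⟩, ρb, ρ1b,
    fun f hf => ⟨hρb.eq_of_mem hzero hf, hρ1b.eq_of_mem hzero hf⟩,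
    fun X Y hX hY => ⟨hρb.ofReal_abs_sub_le hadd hlipρ' hX hY,
      hρ1b.ofReal_abs_sub_le hadd hlipρ1' hX hY⟩,
    (hρb.eq_of_mem hzero hL.zero_mem).trans hρ0,
    fun X Y hX _ hXY => hρb.antitone hL hadd hzero hρmono hX hXY,
    fun X Y hX hY s hs0 hs1 => hρb.convex hL hadd hzero hρconv hX hY hs0 hs1,
    fun X hX a => hρb.add_const hL hρcash hX a,
    fun X Y hX _ hXY => hρ1b.antitone hL hadd hzero hρ1mono hX hXY,
    fun X Y hX hY => hρ1b.add_le hL hadd hzero hρ1sub hX hY,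
    fun s hs X hX => hρ1b.smul_eq hL hadd hzero hρ1hom hs hX,
    fun X hX a => hρ1b.add_const hL hρ1cash hX a,
    fun X hX => hρb.le_of_le hρ1b hmaj hX,
    fun ρ' hρ' hc X hX => hρb.eq_of_tendsto hzero hρ' hc hX,
    fun ρ' hρ' hc X hX => hρ1b.eq_of_tendsto hzero hρ' hc hX⟩

/-- Let `ρ` be a normalized uniformly regular convex risk measure on a
lattice `L ⊆ C_b(Ω)` and `ρ₁` a regular sublinear risk measure majorizing `ρ`. Then
`c(X) = ρ₁(-|X|)` defines a capacity on `L`, both `ρ` and `ρ₁` are `1`-Lipschitz for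
the seminorm `c` on `L`, `ρ₁` extends uniquely to a continuous sublinear risk measure
on `L^1(c)` and `ρ` extends uniquely to a continuous normalized convex risk measure on
`L^1(c)` majorized by the extension of `ρ₁`. -/
theorem stmt19 {Ω : Type} [t : TopologicalSpace Ω] [TopologicalSpace.MetrizableSpace Ω]
    [TopologicalSpace.SeparableSpace Ω]
    (L : Set (Ω → ℝ))
    (hLc : ∀ f ∈ L, Continuous f ∧ ∃ M : ℝ, ∀ x, |f x| ≤ M)
    (hLconst : ∀ a : ℝ, (fun _ => a) ∈ L)
    (hLadd : ∀ f ∈ L, ∀ g ∈ L, f + g ∈ L)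
    (hLsmul : ∀ (a : ℝ), ∀ f ∈ L, a • f ∈ L)
    (hLabs : ∀ f ∈ L, (fun x => |f x|) ∈ L)
    (hgen : t = TopologicalSpace.induced (fun x (f : L) => f.1 x) Pi.topologicalSpace)
    (ρ ρ1 : (Ω → ℝ) → ℝ)
    -- ρ is a normalized convex risk measure on L
    (hρmono : ∀ f ∈ L, ∀ g ∈ L, (∀ x, f x ≤ g x) → ρ g ≤ ρ f)
    (hρconv : ∀ f ∈ L, ∀ g ∈ L, ∀ s : ℝ, 0 ≤ s → s ≤ 1 →
      ρ (s • f + (1 - s) • g) ≤ s * ρ f + (1 - s) * ρ g)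
    (hρcash : ∀ f ∈ L, ∀ a : ℝ, ρ (f + fun _ => a) = ρ f - a)
    (hρ0 : ρ 0 = 0)
    -- ρ is uniformly regular
    (hρbdd : ∀ f ∈ L, BddAbove {r : ℝ | ∃ s : ℝ, 0 < s ∧ r = ρ (s • f) / s})
    (hρureg : ∀ X : ℕ → Ω → ℝ, (∀ n, X n ∈ L) → (∀ x, Antitone fun n => X n x) →
      (∀ x, Tendsto (fun n => X n x) atTop (𝓝 0)) →
      ∀ ε : ℝ, 0 < ε → ∃ N, ∀ n ≥ N, ∀ s : ℝ, 0 < s → ρ (-(s • X n)) / s < ε)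
    -- ρ1 is a regular sublinear risk measure majorizing ρ
    (hρ1mono : ∀ f ∈ L, ∀ g ∈ L, (∀ x, f x ≤ g x) → ρ1 g ≤ ρ1 f)
    (hρ1cash : ∀ f ∈ L, ∀ a : ℝ, ρ1 (f + fun _ => a) = ρ1 f - a)
    (hρ1sub : ∀ f ∈ L, ∀ g ∈ L, ρ1 (f + g) ≤ ρ1 f + ρ1 g)
    (hρ1hom : ∀ s : ℝ, 0 < s → ∀ f ∈ L, ρ1 (s • f) = s * ρ1 f)
    (hρ1reg : ∀ X : ℕ → Ω → ℝ, (∀ n, X n ∈ L) → (∀ x, Antitone fun n => X n x) →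
      (∀ x, Tendsto (fun n => X n x) atTop (𝓝 0)) →
      Tendsto (fun n => ρ1 (-(X n))) atTop (𝓝 0))
    (hmaj : ∀ f ∈ L, ρ f ≤ ρ1 f) :
    -- (A) `c = ρ₁(-|·|)` is a capacity on L
    ((∀ f ∈ L, 0 ≤ capL ρ1 f) ∧
      (∀ f ∈ L, ∀ g ∈ L, capL ρ1 (f + g) ≤ capL ρ1 f + capL ρ1 g) ∧
      (∀ (a : ℝ), ∀ f ∈ L, capL ρ1 (a • f) = |a| * capL ρ1 f) ∧
      (∀ f ∈ L, ∀ g ∈ L, (∀ x, |f x| ≤ |g x|) → capL ρ1 f ≤ capL ρ1 g) ∧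
      (∀ f : ℕ → Ω → ℝ, (∀ n, f n ∈ L) → (∀ x, Antitone fun n => f n x) →
        (∀ x, Tendsto (fun n => f n x) atTop (𝓝 0)) →
        Tendsto (fun n => capL ρ1 (f n)) atTop (𝓝 0))) ∧
    -- (B) ρ and ρ₁ are 1-Lipschitz for the seminorm c on L
    (∀ f ∈ L, ∀ g ∈ L,
      |ρ f - ρ g| ≤ capL ρ1 (f - g) ∧ |ρ1 f - ρ1 g| ≤ capL ρ1 (f - g)) ∧
    -- (C) unique continuous extensions to `L^1(c)`
    (∃ ρb ρ1b : (Ω → ℝ) → ℝ,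
      (∀ f ∈ L, ρb f = ρ f ∧ ρ1b f = ρ1 f) ∧
      -- both extensions are 1-Lipschitz w.r.t. the extended capacity
      (∀ X Y : Ω → ℝ, MemE L ρ1 X → MemE L ρ1 Y →
        ENNReal.ofReal |ρb X - ρb Y| ≤ capExt L ρ1 (X - Y) ∧
        ENNReal.ofReal |ρ1b X - ρ1b Y| ≤ capExt L ρ1 (X - Y)) ∧
      -- ρb is a normalized convex risk measure on `L^1(c)` majorized by ρ1b
      ρb 0 = 0 ∧
      (∀ X Y : Ω → ℝ, MemE L ρ1 X → MemE L ρ1 Y → NonnegE L ρ1 (Y - X) → ρb Y ≤ ρb X) ∧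
      (∀ X Y : Ω → ℝ, MemE L ρ1 X → MemE L ρ1 Y → ∀ s : ℝ, 0 ≤ s → s ≤ 1 →
        ρb (s • X + (1 - s) • Y) ≤ s * ρb X + (1 - s) * ρb Y) ∧
      (∀ X : Ω → ℝ, MemE L ρ1 X → ∀ a : ℝ, ρb (X + fun _ => a) = ρb X - a) ∧
      -- ρ1b is a sublinear risk measure on `L^1(c)`
      (∀ X Y : Ω → ℝ, MemE L ρ1 X → MemE L ρ1 Y → NonnegE L ρ1 (Y - X) → ρ1b Y ≤ ρ1b X) ∧
      (∀ X Y : Ω → ℝ, MemE L ρ1 X → MemE L ρ1 Y → ρ1b (X + Y) ≤ ρ1b X + ρ1b Y) ∧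
      (∀ s : ℝ, 0 < s → ∀ X : Ω → ℝ, MemE L ρ1 X → ρ1b (s • X) = s * ρ1b X) ∧
      (∀ X : Ω → ℝ, MemE L ρ1 X → ∀ a : ℝ, ρ1b (X + fun _ => a) = ρ1b X - a) ∧
      (∀ X : Ω → ℝ, MemE L ρ1 X → ρb X ≤ ρ1b X) ∧
      -- uniqueness of the continuous extensions
      (∀ ρ' : (Ω → ℝ) → ℝ, (∀ f ∈ L, ρ' f = ρ f) →
        (∀ (X : Ω → ℝ), MemE L ρ1 X → ∀ fn : ℕ → Ω → ℝ, (∀ n, MemE L ρ1 (fn n)) →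
          Tendsto (fun n => capExt L ρ1 (X - fn n)) atTop (𝓝 0) →
          Tendsto (fun n => ρ' (fn n)) atTop (𝓝 (ρ' X))) →
        ∀ X : Ω → ℝ, MemE L ρ1 X → ρ' X = ρb X) ∧
      (∀ ρ' : (Ω → ℝ) → ℝ, (∀ f ∈ L, ρ' f = ρ1 f) →
        (∀ (X : Ω → ℝ), MemE L ρ1 X → ∀ fn : ℕ → Ω → ℝ, (∀ n, MemE L ρ1 (fn n)) →
          Tendsto (fun n => capExt L ρ1 (X - fn n)) atTop (𝓝 0) →
          Tendsto (fun n => ρ' (fn n)) atTop (𝓝 (ρ' X))) →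
        ∀ X : Ω → ℝ, MemE L ρ1 X → ρ' X = ρ1b X)) :=
  stmt19_general (t := t) L hLc hLconst hLadd hLsmul hLabs hgen ρ ρ1 hρmono hρconv hρcash hρ0
    hρ1mono hρ1cash hρ1sub hρ1hom hρ1reg hmaj
end
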